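/- arXiv:2108.09790 — 6 statements merged into one kernel-verified Lean document; each statement's English description precedes it below -/
import Mathlib

section
/- If f ∈ G has infinitely many nontrivial orbitals, then there exist g, g₁, g₂ ∈ G such that: g is a restriction of f and g is not the identity; g₁ is a bump which is a restriction of g and whose support equals a single nontrivial orbital of g; g₁ and g₂ have disjoint supports; g = g₁ ∘ g₂; and g₂ is conjugate to g in G. -/
open FirstOrder

/-- `G` is the group of all order-automorphisms of `(ℚ, <)` under composition. -/
abbrev G : Type := ℚ ≃o ℚ

/-- The support of `f ∈ G`: the set of points moved by `f`. -/
def support (f : G) : Set ℚ := {a : ℚ | f a ≠ a}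

/-- The orbital relation of `f`: `a ~_f b` iff `f^m a ≤ b ≤ f^n a` for some integers `m, n`. -/
def orbRel (f : G) (a b : ℚ) : Prop := ∃ m n : ℤ, (f ^ m) a ≤ b ∧ b ≤ (f ^ n) a

/-- An orbital of `f` is an equivalence class of the orbital relation of `f`. -/
def IsOrbital (f : G) (X : Set ℚ) : Prop := ∃ a : ℚ, X = {b : ℚ | orbRel f a b}

/-- An orbital is nontrivial if it contains a point moved by `f`. -/
def IsNontrivialOrbital (f : G) (X : Set ℚ) : Prop :=
  IsOrbital f X ∧ ∃ a ∈ X, f a ≠ a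

/-- A bump is a non-identity element of `G` with exactly one nontrivial orbital. -/
def IsBump (f : G) : Prop := f ≠ 1 ∧ ∃! X : Set ℚ, IsNontrivialOrbital f X

/-- `g` is a restriction of `f`: the support of `g` is contained in that of `f`, and
`g` agrees with `f` on the support of `g`. -/
def IsRestriction (g f : G) : Prop :=
  support g ⊆ support f ∧ ∀ a ∈ support g, g a = f a

/-!
Choose a sequence of distinct nontrivial orbitals of `f` which is monotone in `ℚ`, on which `f`
moves points in the same direction, and such that whether an orbital has a supremum (an infimum)
in `ℚ` does not depend on the orbital. Keeping the odd-indexed ones gives orbitals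
`B₀ < B₁ < ⋯` with a whole orbital below `B₀` and between any two consecutive ones. Let `g`,
`g₁`, `g₂` be `f` restricted to `⋃ Bᵢ`, to `B₀` and to `⋃ Bᵢ₊₁`. An automorphism `h` with
`h g h⁻¹ = g₂` is glued from order isomorphisms `Bᵢ → Bᵢ₊₁` commuting with `f` (a fundamental
domain `[p, f p)` transported along the powers of `f`), from isomorphisms between consecutive
gaps and between the regions below `B₀` and below `B₁`, and the identity above all `Bᵢ`. By
Cantor's theorem two convex subsets of `ℚ` with at least two points are order isomorphic as soon
as they agree on having a least and a greatest element, and for the gaps this is decided by the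
suprema of `Bᵢ` and the infima of `Bᵢ₊₁`. When the orbitals decrease, the same construction is
carried out in `ℚᵒᵈ`.
-/

open Set

section Gluing

variable {ι α β : Type*}

theorem exists_strictMonoOn_iUnion [LinearOrder ι] [Nonempty ι] [PartialOrder α] [Preorder β]
    {A : ι → Set α} {B : ι → Set β}
    (hA : ∀ ⦃i j⦄, i < j → ∀ x ∈ A i, ∀ y ∈ A j, x < y)
    (hB : ∀ ⦃i j⦄, i < j → ∀ x ∈ B i, ∀ y ∈ B j, x < y)
    (φ : ι → α → β) (hφ : ∀ i, StrictMonoOn (φ i) (A i)) (himg : ∀ i, φ i '' A i = B i) :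
    ∃ ψ : α → β, StrictMonoOn ψ (⋃ i, A i) ∧ ψ '' (⋃ i, A i) = ⋃ i, B i ∧
      ∀ i, EqOn ψ (φ i) (A i) := by
  have index_eq : ∀ {i j x}, x ∈ A i → x ∈ A j → i = j := by
    intro i j x hi hj
    by_contra hne
    rcases lt_or_gt_of_ne hne with h | h
    · exact lt_irrefl x (hA h x hi x hj)
    · exact lt_irrefl x (hA h x hj x hi)
  set ψ : α → β := fun x => φ (Classical.epsilon fun i => x ∈ A i) x
  have hψ : ∀ i, EqOn ψ (φ i) (A i) := fun i x hx => by
    simp only [ψ, index_eq (Classical.epsilon_spec (p := fun j => x ∈ A j) ⟨i, hx⟩) hx]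
  have hψimg : ∀ i, ψ '' A i = B i := fun i => (hψ i).image_eq.trans (himg i)
  refine ⟨ψ, ?_, by simp only [image_iUnion, hψimg], hψ⟩
  simp only [StrictMonoOn, mem_iUnion]
  rintro x ⟨i, hx⟩ y ⟨j, hy⟩ hxy
  rcases lt_trichotomy i j with h | rfl | h
  · exact hB h _ (hψimg i ▸ mem_image_of_mem ψ hx) _ (hψimg j ▸ mem_image_of_mem ψ hy)
  · rw [hψ i hx, hψ i hy]
    exact hφ i hx hy hxy
  · exact absurd (hA h y hy x hx) hxy.not_gt

theorem lt_of_mem_cond [Preorder α] {u v : Set α} (h : ∀ x ∈ u, ∀ y ∈ v, x < y) ⦃i j : Bool⦄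
    (hij : i < j) : ∀ x ∈ cond i v u, ∀ y ∈ cond j v u, x < y := by
  cases i <;> cases j <;> first | exact absurd hij (by decide) | exact h

theorem exists_strictMonoOn_union [PartialOrder α] [Preorder β] {s t : Set α} {s' t' : Set β}
    (hst : ∀ x ∈ s, ∀ y ∈ t, x < y) (hst' : ∀ x ∈ s', ∀ y ∈ t', x < y) {φ γ : α → β}
    (hφ : StrictMonoOn φ s) (hφs : φ '' s = s') (hγ : StrictMonoOn γ t) (hγt : γ '' t = t') :
    ∃ ψ : α → β, StrictMonoOn ψ (s ∪ t) ∧ ψ '' (s ∪ t) = s' ∪ t' ∧ EqOn ψ φ s := by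
  obtain ⟨ψ, hψ, hψimg, hψeq⟩ := exists_strictMonoOn_iUnion (A := fun b => cond b t s)
    (B := fun b => cond b t' s') (lt_of_mem_cond hst) (lt_of_mem_cond hst') (fun b => cond b γ φ)
    (fun b => by cases b <;> assumption) (fun b => by cases b <;> assumption)
  rw [union_comm s, union_comm s', union_eq_iUnion, union_eq_iUnion]
  exact ⟨ψ, hψ, hψimg, hψeq false⟩

end Gluing

section OrderInterior

variable {α : Type*}

def orderInterior [Preorder α] (A : Set α) : Set α := A \ (lowerBounds A ∪ upperBounds A)

def endpointSplit [Preorder α] (A : Set α) : Fin 3 → Set α :=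
  ![A ∩ lowerBounds A, orderInterior A, A ∩ upperBounds A]

variable [LinearOrder α] {A : Set α}

theorem exists_lt_of_notMem_lowerBounds {x : α} (h : x ∉ lowerBounds A) : ∃ a ∈ A, a < x := by
  simpa [mem_lowerBounds] using h

theorem exists_gt_of_notMem_upperBounds {x : α} (h : x ∉ upperBounds A) : ∃ a ∈ A, x < a := by
  simpa [mem_upperBounds] using h

theorem Set.OrdConnected.mem_orderInterior (hA : A.OrdConnected) {a b x : α} (ha : a ∈ A)
    (hb : b ∈ A) (hax : a < x) (hxb : x < b) : x ∈ orderInterior A :=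
  ⟨hA.out ha hb ⟨hax.le, hxb.le⟩, by
    rintro (h | h)
    exacts [(h ha).not_gt hax, (h hb).not_gt hxb]⟩

theorem Set.OrdConnected.ordConnected_orderInterior (hA : A.OrdConnected) :
    (orderInterior A).OrdConnected :=
  ⟨fun x hx y hy z hz => by
    obtain ⟨a, ha, hax⟩ := exists_lt_of_notMem_lowerBounds fun h => hx.2 (Or.inl h)
    obtain ⟨b, hb, hyb⟩ := exists_gt_of_notMem_upperBounds fun h => hy.2 (Or.inr h)
    exact hA.mem_orderInterior ha hb (hax.trans_le hz.1) (hz.2.trans_lt hyb)⟩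

theorem iUnion_endpointSplit (A : Set α) : ⋃ i, endpointSplit A i = A := by
  ext x
  simp only [endpointSplit, orderInterior, mem_iUnion, Fin.exists_fin_succ, Fin.isValue,
    Matrix.cons_val_zero, mem_inter_iff, Matrix.cons_val_succ, mem_sdiff, mem_union, not_or,
    Matrix.cons_val_fin_one, exists_const]
  tauto

theorem endpointSplit_lt (hA₂ : A.Nontrivial) ⦃i j : Fin 3⦄ (hij : i < j) :
    ∀ x ∈ endpointSplit A i, ∀ y ∈ endpointSplit A j, x < y := by
  intro x hx y hy
  fin_cases i <;> fin_cases j <;> try exact absurd hij (by decide)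
  all_goals simp only [endpointSplit, Fin.zero_eta, Fin.mk_one, Fin.reduceFinMk, Fin.isValue,
    Matrix.cons_val_zero, Matrix.cons_val_one, Matrix.cons_val] at hx hy
  · exact lt_of_le_of_ne (hx.2 hy.1) (by rintro rfl; exact hy.2 (Or.inl hx.2))
  · refine lt_of_le_of_ne (hx.2 hy.1) ?_
    rintro rfl
    obtain ⟨a, ha, b, hb, hab⟩ := hA₂
    exact hab (((hy.2 ha).antisymm (hx.2 ha)).trans ((hy.2 hb).antisymm (hx.2 hb)).symm)
  · exact lt_of_le_of_ne (hy.2 hx.1) (by rintro rfl; exact hx.2 (Or.inr hy.2))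

variable [DenselyOrdered α]

theorem Set.OrdConnected.exists_lt_mem_orderInterior (hA : A.OrdConnected) {x : α}
    (hx : x ∈ orderInterior A) : ∃ y ∈ orderInterior A, y < x := by
  obtain ⟨a, ha, hax⟩ := exists_lt_of_notMem_lowerBounds fun h => hx.2 (Or.inl h)
  obtain ⟨y, hay, hyx⟩ := exists_between hax
  exact ⟨y, hA.mem_orderInterior ha hx.1 hay hyx, hyx⟩

theorem Set.OrdConnected.exists_gt_mem_orderInterior (hA : A.OrdConnected) {x : α}
    (hx : x ∈ orderInterior A) : ∃ y ∈ orderInterior A, x < y := by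
  obtain ⟨b, hb, hxb⟩ := exists_gt_of_notMem_upperBounds fun h => hx.2 (Or.inr h)
  obtain ⟨y, hxy, hyb⟩ := exists_between hxb
  exact ⟨y, hA.mem_orderInterior hx.1 hb hxy hyb, hxy⟩

theorem Set.OrdConnected.orderInterior_nonempty (hA : A.OrdConnected) (hA₂ : A.Nontrivial) :
    (orderInterior A).Nonempty := by
  obtain ⟨a, ha, b, hb, hab⟩ := hA₂
  rcases lt_or_gt_of_ne hab with h | h
  · obtain ⟨x, hax, hxb⟩ := exists_between h
    exact ⟨x, hA.mem_orderInterior ha hb hax hxb⟩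
  · obtain ⟨x, hbx, hxa⟩ := exists_between h
    exact ⟨x, hA.mem_orderInterior hb ha hbx hxa⟩

end OrderInterior

section CountableDense

variable {α β : Type*}

theorem Set.Subsingleton.exists_strictMonoOn_image_eq [Preorder α] [Preorder β] [Nonempty β]
    {s : Set α} {t : Set β} (hs : s.Subsingleton) (ht : t.Subsingleton)
    (hst : s.Nonempty ↔ t.Nonempty) : ∃ φ : α → β, StrictMonoOn φ s ∧ φ '' s = t := by
  by_cases h : t.Nonempty
  · obtain ⟨b, hb⟩ := h
    exact ⟨fun _ => b, hs.strictMonoOn _, by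
      rw [(hst.2 ⟨b, hb⟩).image_const, ht.eq_singleton_of_mem hb]⟩
  · refine ⟨fun _ => Classical.arbitrary β, hs.strictMonoOn _, ?_⟩
    rw [not_nonempty_iff_eq_empty.1 h, not_nonempty_iff_eq_empty.1 (mt hst.1 h), image_empty]

theorem OrderIso.exists_strictMonoOn_image_eq [Preorder α] [Preorder β] [Nonempty β]
    {s : Set α} {t : Set β} (e : s ≃o t) : ∃ φ : α → β, StrictMonoOn φ s ∧ φ '' s = t := by
  classical
  refine ⟨fun x => if hx : x ∈ s then e ⟨x, hx⟩ else Classical.arbitrary β,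
    fun x hx y hy hxy => by
      simpa only [dif_pos hx, dif_pos hy, Subtype.coe_lt_coe] using
        e.strictMono (show (⟨x, hx⟩ : s) < ⟨y, hy⟩ from hxy), ?_⟩
  ext z
  refine ⟨?_, fun hz => ⟨e.symm ⟨z, hz⟩, (e.symm ⟨z, hz⟩).2, by simp⟩⟩
  rintro ⟨x, hx, rfl⟩
  simp [hx]

variable [LinearOrder α] [DenselyOrdered α] [Countable α]
  [LinearOrder β] [DenselyOrdered β] [Countable β]

theorem Set.OrdConnected.exists_strictMonoOn_image_eq_of_noEndpoints {s : Set α} {t : Set β}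
    (hs : s.OrdConnected) (ht : t.OrdConnected) (hs₀ : s.Nonempty) (ht₀ : t.Nonempty)
    (hs_lt : ∀ x ∈ s, ∃ y ∈ s, y < x) (hs_gt : ∀ x ∈ s, ∃ y ∈ s, x < y)
    (ht_lt : ∀ x ∈ t, ∃ y ∈ t, y < x) (ht_gt : ∀ x ∈ t, ∃ y ∈ t, x < y) :
    ∃ φ : α → β, StrictMonoOn φ s ∧ φ '' s = t := by
  have := hs₀.to_subtype
  have := ht₀.to_subtype
  have : NoMinOrder s := ⟨fun x => let ⟨y, hy, h⟩ := hs_lt x x.2; ⟨⟨y, hy⟩, h⟩⟩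
  have : NoMaxOrder s := ⟨fun x => let ⟨y, hy, h⟩ := hs_gt x x.2; ⟨⟨y, hy⟩, h⟩⟩
  have : NoMinOrder t := ⟨fun x => let ⟨y, hy, h⟩ := ht_lt x x.2; ⟨⟨y, hy⟩, h⟩⟩
  have : NoMaxOrder t := ⟨fun x => let ⟨y, hy, h⟩ := ht_gt x x.2; ⟨⟨y, hy⟩, h⟩⟩
  obtain ⟨e⟩ := Order.iso_of_countable_dense s t
  have : Nonempty β := ht₀.to_type
  exact e.exists_strictMonoOn_image_eq

theorem Set.OrdConnected.exists_strictMonoOn_image_eq {A : Set α} {B : Set β}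
    (hA : A.OrdConnected) (hB : B.OrdConnected) (hA₂ : A.Nontrivial) (hB₂ : B.Nontrivial)
    (hmin : (∃ a, IsLeast A a) ↔ ∃ b, IsLeast B b)
    (hmax : (∃ a, IsGreatest A a) ↔ ∃ b, IsGreatest B b) :
    ∃ φ : α → β, StrictMonoOn φ A ∧ φ '' A = B := by
  have : Nonempty β := hB₂.nonempty.to_type
  have hpiece : ∀ i, ∃ φ : α → β,
      StrictMonoOn φ (endpointSplit A i) ∧ φ '' endpointSplit A i = endpointSplit B i := by
    intro i
    fin_cases i <;> simp only [endpointSplit, Fin.zero_eta, Fin.mk_one, Fin.reduceFinMk,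
      Fin.isValue, Matrix.cons_val_zero, Matrix.cons_val_one, Matrix.cons_val]
    · exact Subsingleton.exists_strictMonoOn_image_eq
        (fun x hx y hy => (hx.2 hy.1).antisymm (hy.2 hx.1))
        (fun x hx y hy => (hx.2 hy.1).antisymm (hy.2 hx.1)) hmin
    · exact hA.ordConnected_orderInterior.exists_strictMonoOn_image_eq_of_noEndpoints
        hB.ordConnected_orderInterior (hA.orderInterior_nonempty hA₂)
        (hB.orderInterior_nonempty hB₂) (fun _ => hA.exists_lt_mem_orderInterior)
        (fun _ => hA.exists_gt_mem_orderInterior) (fun _ => hB.exists_lt_mem_orderInterior)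
        (fun _ => hB.exists_gt_mem_orderInterior)
    · exact Subsingleton.exists_strictMonoOn_image_eq
        (fun x hx y hy => (hy.2 hx.1).antisymm (hx.2 hy.1))
        (fun x hx y hy => (hy.2 hx.1).antisymm (hx.2 hy.1)) hmax
  choose φ hφ himg using hpiece
  obtain ⟨ψ, hψ, hψimg, -⟩ :=
    exists_strictMonoOn_iUnion (endpointSplit_lt hA₂) (endpointSplit_lt hB₂) φ hφ himg
  simp only [iUnion_endpointSplit] at hψ hψimg
  exact ⟨ψ, hψ, hψimg⟩

end CountableDense

section Gaps

variable {α β : Type*} [LinearOrder α]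

theorem isLeast_upperBounds_inter_lowerBounds_iff {C D : Set α}
    (hCD : ∀ x ∈ C, ∀ y ∈ D, x ≤ y) {m : α} :
    IsLeast (upperBounds C ∩ lowerBounds D) m ↔ IsLUB C m := by
  refine ⟨fun h => ⟨h.1.1, fun u hu => ?_⟩,
    fun h => ⟨⟨h.1, fun y hy => h.2 fun x hx => hCD x hx y hy⟩, fun z hz => h.2 hz.1⟩⟩
  by_cases hu' : u ∈ lowerBounds D
  · exact h.2 ⟨hu, hu'⟩
  · obtain ⟨y, hy, hyu⟩ := exists_lt_of_notMem_lowerBounds hu'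
    exact (h.1.2 hy).trans hyu.le

theorem isGreatest_upperBounds_inter_lowerBounds_iff {C D : Set α}
    (hCD : ∀ x ∈ C, ∀ y ∈ D, x ≤ y) {m : α} :
    IsGreatest (upperBounds C ∩ lowerBounds D) m ↔ IsGLB D m := by
  rw [inter_comm]
  exact isLeast_upperBounds_inter_lowerBounds_iff (α := αᵒᵈ) fun x hx y hy => hCD y hy x hx

theorem ordConnected_upperBounds_inter_lowerBounds (C D : Set α) :
    (upperBounds C ∩ lowerBounds D).OrdConnected :=
  ⟨fun _ hx _ hy _ hz =>
    ⟨fun _ hc => (hx.1 hc).trans hz.1, fun _ hd => hz.2.trans (hy.2 hd)⟩⟩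

theorem exists_strictMonoOn_image_upperBounds_inter_lowerBounds [DenselyOrdered α] [Countable α]
    [LinearOrder β] [DenselyOrdered β] [Countable β] {C D : Set α} {C' D' : Set β}
    (hCD : ∀ x ∈ C, ∀ y ∈ D, x ≤ y) (hCD' : ∀ x ∈ C', ∀ y ∈ D', x ≤ y)
    (h₂ : (upperBounds C ∩ lowerBounds D).Nontrivial)
    (h₂' : (upperBounds C' ∩ lowerBounds D').Nontrivial)
    (hlub : (∃ a, IsLUB C a) ↔ ∃ b, IsLUB C' b) (hglb : (∃ a, IsGLB D a) ↔ ∃ b, IsGLB D' b) :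
    ∃ γ : α → β, StrictMonoOn γ (upperBounds C ∩ lowerBounds D) ∧
      γ '' (upperBounds C ∩ lowerBounds D) = upperBounds C' ∩ lowerBounds D' := by
  refine (ordConnected_upperBounds_inter_lowerBounds C D).exists_strictMonoOn_image_eq
    (ordConnected_upperBounds_inter_lowerBounds C' D') h₂ h₂' ?_ ?_
  · simpa only [isLeast_upperBounds_inter_lowerBounds_iff hCD,
      isLeast_upperBounds_inter_lowerBounds_iff hCD'] using hlub
  · simpa only [isGreatest_upperBounds_inter_lowerBounds_iff hCD,
      isGreatest_upperBounds_inter_lowerBounds_iff hCD'] using hglb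

end Gaps

theorem IsLowerSet.exists_forall_mem_iff_lt {s : Set ℕ} (hs : IsLowerSet s) :
    ∃ n : ℕ∞, ∀ i : ℕ, i ∈ s ↔ (i : ℕ∞) < n := by
  classical
  by_cases h : ∃ i, i ∉ s
  · refine ⟨Nat.find h, fun i => ?_⟩
    rw [Nat.cast_lt]
    exact ⟨fun hi => lt_of_not_ge fun hle => Nat.find_spec h (hs hle hi),
      fun hi => not_not.1 (Nat.find_min h hi)⟩
  · simp only [not_exists, not_not] at h
    exact ⟨⊤, fun i => iff_of_true (h i) (ENat.natCast_lt_top i)⟩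

structure IsIncreasingIntervals {α : Type*} [Preorder α] (B : ℕ → Set α) : Prop where
  ordConnected : ∀ i, (B i).OrdConnected
  nonempty : ∀ i, (B i).Nonempty
  exists_lt : ∀ i, ∀ x ∈ B i, ∃ y ∈ B i, y < x
  exists_gt : ∀ i, ∀ x ∈ B i, ∃ y ∈ B i, x < y
  lt : ∀ ⦃i j⦄, i < j → ∀ x ∈ B i, ∀ y ∈ B j, x < y

/-- For increasing intervals, the layers `0`, `k + 1` and `⊤` are the region below `B 0`, the set
`B k` together with the gap above it, and the region above all `B i`. -/
def layer {α : Type*} [Preorder α] (B : ℕ → Set α) (n : ℕ∞) : Set α :=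
  {x | ∀ i : ℕ, (∃ y ∈ B i, y < x) ↔ (i : ℕ∞) < n}

theorem layer_lt {α : Type*} [LinearOrder α] (B : ℕ → Set α) ⦃n m : ℕ∞⦄ (hnm : n < m) :
    ∀ x ∈ layer B n, ∀ y ∈ layer B m, x < y := by
  intro x hx y hy
  lift n to ℕ using hnm.ne_top
  obtain ⟨z, hz, hzy⟩ := (hy n).2 hnm
  by_contra! hyx
  exact lt_irrefl (n : ℕ∞) ((hx n).1 ⟨z, hz, hzy.trans_le hyx⟩)

namespace IsIncreasingIntervals

variable {α : Type*} [LinearOrder α] {B : ℕ → Set α}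

theorem comp (hB : IsIncreasingIntervals B) {e : ℕ → ℕ} (he : StrictMono e) :
    IsIncreasingIntervals fun i => B (e i) where
  ordConnected i := hB.ordConnected (e i)
  nonempty i := hB.nonempty (e i)
  exists_lt i := hB.exists_lt (e i)
  exists_gt i := hB.exists_gt (e i)
  lt _ _ hij := hB.lt (he hij)

theorem shift (hB : IsIncreasingIntervals B) : IsIncreasingIntervals fun i => B (i + 1) :=
  hB.comp fun _ _ h => Nat.add_lt_add_right h 1

theorem nontrivial (hB : IsIncreasingIntervals B) (i : ℕ) : (B i).Nontrivial :=
  let ⟨x, hx⟩ := hB.nonempty i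
  let ⟨y, hy, hxy⟩ := hB.exists_gt i x hx
  ⟨x, hx, y, hy, hxy.ne⟩

theorem subset_lowerBounds (hB : IsIncreasingIntervals B) {i j : ℕ} (hij : i < j) :
    B i ⊆ lowerBounds (B j) :=
  fun _ hx _ hy => (hB.lt hij _ hx _ hy).le

theorem subset_upperBounds (hB : IsIncreasingIntervals B) {i j : ℕ} (hij : i < j) :
    B j ⊆ upperBounds (B i) :=
  fun _ hy _ hx => (hB.lt hij _ hx _ hy).le

theorem lt_of_mem_upperBounds (hB : IsIncreasingIntervals B) {i : ℕ} {x y : α} (hx : x ∈ B i)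
    (hy : y ∈ upperBounds (B i)) : x < y :=
  let ⟨_, hz, hxz⟩ := hB.exists_gt i x hx
  hxz.trans_le (hy hz)

theorem exists_lt_of_le (hB : IsIncreasingIntervals B) {i j : ℕ} (hij : i ≤ j) {x : α}
    (h : ∃ y ∈ B j, y < x) : ∃ y ∈ B i, y < x := by
  obtain rfl | hij := hij.eq_or_lt
  · exact h
  obtain ⟨y, hy, hyx⟩ := h
  obtain ⟨z, hz⟩ := hB.nonempty i
  exact ⟨z, hz, (hB.lt hij z hz y hy).trans hyx⟩

theorem iUnion_layer (hB : IsIncreasingIntervals B) : ⋃ n, layer B n = univ :=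
  eq_univ_of_forall fun x =>
    let ⟨n, hn⟩ := IsLowerSet.exists_forall_mem_iff_lt
      (s := {i | ∃ y ∈ B i, y < x}) fun _ _ hij => hB.exists_lt_of_le hij
    mem_iUnion.2 ⟨n, hn⟩

theorem layer_zero (hB : IsIncreasingIntervals B) : layer B 0 = lowerBounds (B 0) := by
  ext x
  simp only [layer, mem_ofPred_eq, not_lt_zero, iff_false]
  refine ⟨fun h y hy => not_lt.1 fun hyx => h 0 ⟨y, hy, hyx⟩, fun h i hi => ?_⟩
  obtain ⟨z, hz, hzx⟩ := hB.exists_lt_of_le (Nat.zero_le i) hi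
  exact (h hz).not_gt hzx

theorem mem_layer_succ_iff (hB : IsIncreasingIntervals B) {k : ℕ} {x : α} :
    x ∈ layer B ((k + 1 : ℕ) : ℕ∞) ↔ (∃ y ∈ B k, y < x) ∧ x ∈ lowerBounds (B (k + 1)) := by
  simp only [layer, mem_ofPred_eq, Nat.cast_lt]
  refine ⟨fun h => ⟨(h k).2 k.lt_succ_self, fun y hy => not_lt.1 fun hyx =>
    lt_irrefl (k + 1) ((h (k + 1)).1 ⟨y, hy, hyx⟩)⟩, fun ⟨hk, hx⟩ i => ⟨fun hi => ?_,
    fun hi => hB.exists_lt_of_le (Nat.lt_succ_iff.1 hi) hk⟩⟩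
  by_contra! hki
  obtain ⟨y, hy, hyx⟩ := hB.exists_lt_of_le hki hi
  exact (hx hy).not_gt hyx

theorem layer_succ (hB : IsIncreasingIntervals B) (k : ℕ) :
    layer B ((k + 1 : ℕ) : ℕ∞) = B k ∪ (upperBounds (B k) ∩ lowerBounds (B (k + 1))) := by
  ext x
  rw [hB.mem_layer_succ_iff]
  constructor
  · rintro ⟨⟨y, hy, hyx⟩, hx⟩
    by_cases hxk : x ∈ B k
    · exact Or.inl hxk
    · refine Or.inr ⟨fun z hz => not_lt.1 fun hxz => hxk ?_, hx⟩
      exact (hB.ordConnected k).out hy hz ⟨hyx.le, hxz.le⟩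
  · rintro (hx | ⟨hx, hx'⟩)
    · exact ⟨hB.exists_lt k x hx, hB.subset_lowerBounds k.lt_succ_self hx⟩
    · obtain ⟨y, hy⟩ := hB.nonempty k
      exact ⟨⟨y, hy, hB.lt_of_mem_upperBounds hy hx⟩, hx'⟩

theorem layer_top_succ (hB : IsIncreasingIntervals B) :
    layer (fun i => B (i + 1)) ⊤ = layer B ⊤ := by
  ext x
  simp only [layer, mem_ofPred_eq, ENat.natCast_lt_top, iff_true]
  exact ⟨fun h i => hB.exists_lt_of_le i.le_succ (h i), fun h i => h (i + 1)⟩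

variable [DenselyOrdered α] [Countable α]

theorem exists_strictMonoOn_image_layer_zero (hB : IsIncreasingIntervals B)
    (hlow : (lowerBounds (B 0)).Nontrivial)
    (hglb : (∃ a, IsGLB (B 0) a) ↔ ∃ a, IsGLB (B 1) a) :
    ∃ γ : α → α, StrictMonoOn γ (layer B 0) ∧ γ '' layer B 0 = layer (fun i => B (i + 1)) 0 := by
  have hlow' : lowerBounds (B 0) ⊆ lowerBounds (B 1) := fun x hx y hy =>
    let ⟨z, hz⟩ := hB.nonempty 0
    (hx hz).trans (hB.lt zero_lt_one z hz y hy).le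
  obtain ⟨γ, hγ, hγimg⟩ := exists_strictMonoOn_image_upperBounds_inter_lowerBounds
    (C := (∅ : Set α)) (C' := (∅ : Set α)) (by simp) (by simp) (by simpa using hlow)
    (by simpa using hlow.mono hlow') Iff.rfl hglb
  simp only [upperBounds_empty, univ_inter] at hγ hγimg
  rw [hB.layer_zero, hB.shift.layer_zero]
  exact ⟨γ, hγ, hγimg⟩

theorem exists_strictMonoOn_image_layer_succ (hB : IsIncreasingIntervals B) {k : ℕ}
    (hgap : (upperBounds (B k) ∩ lowerBounds (B (k + 1))).Nontrivial)
    (hgap' : (upperBounds (B (k + 1)) ∩ lowerBounds (B (k + 2))).Nontrivial)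
    (hlub : (∃ a, IsLUB (B k) a) ↔ ∃ a, IsLUB (B (k + 1)) a)
    (hglb : (∃ a, IsGLB (B (k + 1)) a) ↔ ∃ a, IsGLB (B (k + 2)) a)
    {φ : α → α} (hφ : StrictMonoOn φ (B k)) (himg : φ '' B k = B (k + 1)) :
    ∃ ψ : α → α, (StrictMonoOn ψ (layer B ((k + 1 : ℕ) : ℕ∞)) ∧
      ψ '' layer B ((k + 1 : ℕ) : ℕ∞) = layer (fun i => B (i + 1)) ((k + 1 : ℕ) : ℕ∞)) ∧
      EqOn ψ φ (B k) := by
  obtain ⟨γ, hγ, hγimg⟩ := exists_strictMonoOn_image_upperBounds_inter_lowerBounds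
    (fun x hx y hy => (hB.lt k.lt_succ_self x hx y hy).le)
    (fun x hx y hy => (hB.lt (k + 1).lt_succ_self x hx y hy).le) hgap hgap' hlub hglb
  obtain ⟨ψ, hψ, hψimg, hψφ⟩ := exists_strictMonoOn_union
    (fun x hx y hy => hB.lt_of_mem_upperBounds hx hy.1)
    (fun x hx y hy => hB.lt_of_mem_upperBounds hx hy.1) hφ himg hγ hγimg
  rw [hB.layer_succ, hB.shift.layer_succ]
  exact ⟨ψ, ⟨hψ, hψimg⟩, hψφ⟩

theorem exists_orderIso_eqOn (hB : IsIncreasingIntervals B)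
    (hlow : (lowerBounds (B 0)).Nontrivial)
    (hgap : ∀ i, (upperBounds (B i) ∩ lowerBounds (B (i + 1))).Nontrivial)
    (hlub : ∀ i, (∃ a, IsLUB (B i) a) ↔ ∃ a, IsLUB (B (i + 1)) a)
    (hglb : ∀ i, (∃ a, IsGLB (B i) a) ↔ ∃ a, IsGLB (B (i + 1)) a)
    (φ : ℕ → α → α) (hφ : ∀ i, StrictMonoOn (φ i) (B i)) (himg : ∀ i, φ i '' B i = B (i + 1)) :
    ∃ H : α ≃o α, ∀ i, EqOn H (φ i) (B i) := by
  have layer_map : ∀ n : ℕ∞, ∃ ψ : α → α,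
      (StrictMonoOn ψ (layer B n) ∧ ψ '' layer B n = layer (fun i => B (i + 1)) n) ∧
        ∀ k : ℕ, n = (k + 1 : ℕ) → EqOn ψ (φ k) (B k) := by
    intro n
    induction n using ENat.recTopCoe with
    | top =>
      exact ⟨id, ⟨strictMonoOn_id, by rw [image_id, hB.layer_top_succ]⟩,
        fun k hk => absurd hk (ENat.top_ne_natCast _)⟩
    | coe n =>
      cases n with
      | zero =>
        obtain ⟨γ, hγ⟩ := hB.exists_strictMonoOn_image_layer_zero hlow (hglb 0)
        exact ⟨γ, hγ, fun k hk => absurd hk (by exact_mod_cast k.succ_ne_zero.symm)⟩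
      | succ k =>
        obtain ⟨ψ, hψ, hψφ⟩ := hB.exists_strictMonoOn_image_layer_succ (hgap k) (hgap (k + 1))
          (hlub k) (hglb (k + 1)) (hφ k) (himg k)
        refine ⟨ψ, hψ, fun j hj => ?_⟩
        obtain rfl : k = j := Nat.succ_injective (by exact_mod_cast hj)
        exact hψφ
  choose ψ hψ hψφ using layer_map
  obtain ⟨H, hH, hHimg, hHψ⟩ := exists_strictMonoOn_iUnion (layer_lt B) (layer_lt _) ψ
    (fun n => (hψ n).1) (fun n => (hψ n).2)
  rw [hB.iUnion_layer, strictMonoOn_univ] at hH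
  rw [hB.iUnion_layer, hB.shift.iUnion_layer,
    image_univ] at hHimg
  refine ⟨StrictMono.orderIsoOfSurjective H hH (range_eq_univ.1 hHimg), fun i x hx => ?_⟩
  have hx' : x ∈ layer B ((i + 1 : ℕ) : ℕ∞) := by
    rw [hB.layer_succ]
    exact Or.inl hx
  exact (hHψ _ hx').trans (hψφ _ i rfl hx)

end IsIncreasingIntervals

theorem IsIncreasingIntervals.exists_orderIso_eqOn_odd {α : Type*} [LinearOrder α]
    [DenselyOrdered α] [Countable α] {O : ℕ → Set α} (hO : IsIncreasingIntervals O)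
    (hlub : ∀ i j, (∃ a, IsLUB (O i) a) ↔ ∃ a, IsLUB (O j) a)
    (hglb : ∀ i j, (∃ a, IsGLB (O i) a) ↔ ∃ a, IsGLB (O j) a) (φ : ℕ → α → α)
    (hφ : ∀ i, StrictMonoOn (φ i) (O (2 * i + 1)))
    (himg : ∀ i, φ i '' O (2 * i + 1) = O (2 * i + 3)) :
    ∃ H : α ≃o α, ∀ i, EqOn H (φ i) (O (2 * i + 1)) :=
  (hO.comp (e := fun i => 2 * i + 1) fun _ _ h => by simp only; omega).exists_orderIso_eqOn
    ((hO.nontrivial 0).mono (hO.subset_lowerBounds zero_lt_one))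
    (fun i => (hO.nontrivial (2 * i + 2)).mono fun _ hx =>
      ⟨hO.subset_upperBounds (by omega) hx, hO.subset_lowerBounds (by omega) hx⟩)
    (fun _ => hlub _ _) (fun _ => hglb _ _) φ hφ himg

section Orbitals

variable {f : G} {a b : ℚ}

theorem zpow_add_one_apply (f : G) (k : ℤ) (x : ℚ) : (f ^ (k + 1)) x = f ((f ^ k) x) := by
  rw [add_comm, zpow_one_add]
  rfl

theorem zpow_add_one_apply' (f : G) (k : ℤ) (x : ℚ) : (f ^ (k + 1)) x = (f ^ k) (f x) := by
  rw [zpow_add_one]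
  rfl

theorem orbRel.refl (f : G) (a : ℚ) : orbRel f a a :=
  ⟨0, 0, by simp, by simp⟩

theorem orbRel.symm (h : orbRel f a b) : orbRel f b a := by
  obtain ⟨m, n, hm, hn⟩ := h
  refine ⟨-n, -m, ?_, ?_⟩
  · simpa [← RelIso.mul_apply, ← zpow_add] using (f ^ (-n)).monotone hn
  · simpa [← RelIso.mul_apply, ← zpow_add] using (f ^ (-m)).monotone hm

theorem orbRel.trans {c : ℚ} (h : orbRel f a b) (h' : orbRel f b c) : orbRel f a c := by
  obtain ⟨m, n, hm, hn⟩ := h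
  obtain ⟨p, q, hp, hq⟩ := h'
  refine ⟨p + m, q + n, ?_, ?_⟩
  · rw [zpow_add, RelIso.mul_apply]
    exact ((f ^ p).monotone hm).trans hp
  · rw [zpow_add, RelIso.mul_apply]
    exact hq.trans ((f ^ q).monotone hn)

def orbital (f : G) (a : ℚ) : Set ℚ := {b | orbRel f a b}

theorem self_mem_orbital (f : G) (a : ℚ) : a ∈ orbital f a :=
  orbRel.refl f a

theorem orbital_eq_of_mem (h : b ∈ orbital f a) : orbital f b = orbital f a :=
  ext fun _ => ⟨fun hc => orbRel.trans h hc, fun hc => orbRel.trans (orbRel.symm h) hc⟩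

theorem zpow_apply_mem_orbital (h : b ∈ orbital f a) (k : ℤ) : (f ^ k) b ∈ orbital f a := by
  obtain ⟨m, n, hm, hn⟩ := h
  refine ⟨k + m, k + n, ?_, ?_⟩ <;> rw [zpow_add, RelIso.mul_apply]
  exacts [(f ^ k).monotone hm, (f ^ k).monotone hn]

theorem apply_mem_orbital (h : b ∈ orbital f a) : f b ∈ orbital f a := by
  simpa using zpow_apply_mem_orbital h 1

theorem inv_apply_mem_orbital (h : b ∈ orbital f a) : f⁻¹ b ∈ orbital f a := by
  simpa using zpow_apply_mem_orbital h (-1)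

theorem ordConnected_orbital (f : G) (a : ℚ) : (orbital f a).OrdConnected :=
  ⟨fun _ hx _ hy _ hz => by
    obtain ⟨m, -, hm, -⟩ := hx
    obtain ⟨-, n, -, hn⟩ := hy
    exact ⟨m, n, hm.trans hz.1, hz.2.trans hn⟩⟩

theorem orbital_inv (f : G) (a : ℚ) : orbital f⁻¹ a = orbital f a := by
  ext b
  constructor
  · rintro ⟨m, n, hm, hn⟩
    exact ⟨-m, -n, by simpa using hm, by simpa using hn⟩
  · rintro ⟨m, n, hm, hn⟩
    exact ⟨-m, -n, by simpa using hm, by simpa using hn⟩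

theorem zpow_apply_strictMono (ha : a < f a) : StrictMono fun k : ℤ => (f ^ k) a :=
  strictMono_int_of_lt_succ fun k => by
    simpa only [zpow_add_one_apply'] using (f ^ k).strictMono ha

theorem exists_zpow_apply_le_lt (ha : a < f a) (hb : b ∈ orbital f a) :
    ∃ k : ℤ, (f ^ k) a ≤ b ∧ b < (f ^ (k + 1)) a := by
  obtain ⟨m, n, hm, hn⟩ := hb
  have hmono := zpow_apply_strictMono ha
  obtain ⟨k, hk, hmax⟩ := Int.exists_greatest_of_bdd (P := fun k => (f ^ k) a ≤ b)
    ⟨n, fun z hz => hmono.le_iff_le.1 (hz.trans hn)⟩ ⟨m, hm⟩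
  exact ⟨k, hk, lt_of_not_ge fun h => by linarith [hmax (k + 1) h]⟩

theorem lt_apply_of_mem_orbital (ha : a < f a) (hb : b ∈ orbital f a) : b < f b := by
  obtain ⟨k, hk, hbk⟩ := exists_zpow_apply_le_lt ha hb
  rw [zpow_add_one_apply] at hbk
  exact hbk.trans_le (f.monotone hk)

theorem lt_inv_apply_of_apply_lt (ha : f a < a) : a < f⁻¹ a := by
  simpa using f⁻¹.strictMono ha

theorem apply_ne_of_mem_orbital (ha : f a ≠ a) (hb : b ∈ orbital f a) : f b ≠ b := by
  rcases ha.lt_or_gt with h | h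
  · rw [← orbital_inv] at hb
    have := f.strictMono (lt_apply_of_mem_orbital (lt_inv_apply_of_apply_lt h) hb)
    simp only [RelIso.apply_inv_self] at this
    exact this.ne
  · exact (lt_apply_of_mem_orbital h hb).ne'

theorem exists_lt_mem_orbital (ha : f a ≠ a) (hb : b ∈ orbital f a) :
    ∃ c ∈ orbital f a, c < b := by
  rcases (apply_ne_of_mem_orbital ha hb).lt_or_gt with h | h
  · exact ⟨f b, apply_mem_orbital hb, h⟩
  · exact ⟨f⁻¹ b, inv_apply_mem_orbital hb, by simpa using f⁻¹.strictMono h⟩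

theorem exists_gt_mem_orbital (ha : f a ≠ a) (hb : b ∈ orbital f a) :
    ∃ c ∈ orbital f a, b < c := by
  rcases (apply_ne_of_mem_orbital ha hb).lt_or_gt with h | h
  · exact ⟨f⁻¹ b, inv_apply_mem_orbital hb, by simpa using f⁻¹.strictMono h⟩
  · exact ⟨f b, apply_mem_orbital hb, h⟩

theorem orbital_lt_orbital (hab : a < b) (hsep : ¬orbRel f a b) :
    ∀ x ∈ orbital f a, ∀ y ∈ orbital f b, x < y := by
  intro x hx y hy
  by_contra! hyx
  rcases le_or_gt a y with hay | hya
  · exact hsep (orbRel.trans ((ordConnected_orbital f a).out (self_mem_orbital f a) hx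
      ⟨hay, hyx⟩) (orbRel.symm hy))
  · exact hsep (orbRel.symm ((ordConnected_orbital f b).out hy (self_mem_orbital f b)
      ⟨hya.le, hab.le⟩))

theorem disjoint_orbital (hsep : ¬orbRel f a b) : Disjoint (orbital f a) (orbital f b) :=
  disjoint_left.2 fun _ hx hy => hsep (orbRel.trans hx (orbRel.symm hy))

end Orbitals

section Blocks

variable {f : G}

theorem isIncreasingIntervals_orbital {u : ℕ → ℚ} (hu : StrictMono u)
    (hmove : ∀ i, f (u i) ≠ u i) (hsep : Pairwise fun i j => ¬orbRel f (u i) (u j)) :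
    IsIncreasingIntervals fun i => orbital f (u i) where
  ordConnected i := ordConnected_orbital f (u i)
  nonempty i := ⟨u i, self_mem_orbital f (u i)⟩
  exists_lt i _ := exists_lt_mem_orbital (hmove i)
  exists_gt i _ := exists_gt_mem_orbital (hmove i)
  lt _ _ hij := orbital_lt_orbital (hu hij) (hsep hij.ne)

theorem isIncreasingIntervals_orbital_of_strictAnti {u : ℕ → ℚ} (hu : StrictAnti u)
    (hmove : ∀ i, f (u i) ≠ u i) (hsep : Pairwise fun i j => ¬orbRel f (u i) (u j)) :
    IsIncreasingIntervals (α := ℚᵒᵈ) fun i => orbital f (u i) where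
  ordConnected i := (ordConnected_orbital f (u i)).dual
  nonempty i := ⟨u i, self_mem_orbital f (u i)⟩
  exists_lt i _ := exists_gt_mem_orbital (hmove i)
  exists_gt i _ := exists_lt_mem_orbital (hmove i)
  lt _ _ hij x hx y hy := orbital_lt_orbital (hu hij) (hsep hij.ne') y hy x hx

theorem orbital_eq_iUnion_image_zpow_Ico {p : ℚ} (hp : p < f p) :
    orbital f p = ⋃ k : ℤ, (f ^ k) '' Ico p (f p) := by
  ext x
  simp only [OrderIso.image_Ico, ← zpow_add_one_apply', mem_iUnion]
  exact ⟨exists_zpow_apply_le_lt hp, fun ⟨k, hk, hk'⟩ => ⟨k, k + 1, hk, hk'.le⟩⟩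

theorem image_zpow_Ico_lt {p : ℚ} (hp : p < f p) ⦃k l : ℤ⦄ (hkl : k < l) :
    ∀ x ∈ (f ^ k) '' Ico p (f p), ∀ y ∈ (f ^ l) '' Ico p (f p), x < y := by
  simp only [OrderIso.image_Ico, ← zpow_add_one_apply']
  exact fun x hx y hy =>
    hx.2.trans_le (((zpow_apply_strictMono hp).monotone (Int.add_one_le_of_lt hkl)).trans hy.1)

theorem exists_strictMonoOn_orbital_commute_of_lt {p q : ℚ} (hp : p < f p) (hq : q < f q) :
    ∃ φ : ℚ → ℚ, StrictMonoOn φ (orbital f p) ∧ φ '' orbital f p = orbital f q ∧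
      ∀ x ∈ orbital f p, φ (f x) = f (φ x) := by
  have nontrivial_Ico : ∀ {a b : ℚ}, a < b → (Ico a b).Nontrivial := fun h =>
    let ⟨c, hac, hcb⟩ := exists_between h
    ⟨_, left_mem_Ico.2 h, c, ⟨hac.le, hcb⟩, hac.ne⟩
  have no_greatest_Ico : ∀ a b : ℚ, ¬∃ m, IsGreatest (Ico a b) m := fun a b ⟨m, hm, hmax⟩ =>
    let ⟨c, hmc, hcb⟩ := exists_between hm.2
    (hmax ⟨hm.1.trans hmc.le, hcb⟩).not_gt hmc
  obtain ⟨φ₀, hφ₀, hφ₀img⟩ := ordConnected_Ico.exists_strictMonoOn_image_eq ordConnected_Ico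
    (nontrivial_Ico hp) (nontrivial_Ico hq)
    (iff_of_true ⟨p, isLeast_Ico hp⟩ ⟨q, isLeast_Ico hq⟩)
    (iff_of_false (no_greatest_Ico _ _) (no_greatest_Ico _ _))
  set φ : ℤ → ℚ → ℚ := fun k x => (f ^ k) (φ₀ ((f ^ k)⁻¹ x))
  have hφ_apply : ∀ k z, φ k ((f ^ k) z) = (f ^ k) (φ₀ z) := by simp [φ]
  obtain ⟨ψ, hψ, hψimg, hψφ⟩ := exists_strictMonoOn_iUnion (image_zpow_Ico_lt hp)
    (image_zpow_Ico_lt hq) φ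
    (fun k => by
      rintro _ ⟨z, hz, rfl⟩ _ ⟨w, hw, rfl⟩ h
      rw [hφ_apply, hφ_apply]
      exact (f ^ k).strictMono (hφ₀ hz hw ((f ^ k).lt_iff_lt.1 h)))
    (fun k => by
      rw [image_image, show (fun z => φ k ((f ^ k) z)) = (f ^ k) ∘ φ₀ from funext (hφ_apply k),
        image_comp, hφ₀img])
  rw [← orbital_eq_iUnion_image_zpow_Ico hp, ← orbital_eq_iUnion_image_zpow_Ico hq] at *
  refine ⟨ψ, hψ, hψimg, fun x hx => ?_⟩
  rw [orbital_eq_iUnion_image_zpow_Ico hp, mem_iUnion] at hx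
  obtain ⟨k, z, hz, rfl⟩ := hx
  rw [← zpow_add_one_apply, hψφ (k + 1) (mem_image_of_mem _ hz), hφ_apply, zpow_add_one_apply,
    hψφ k (mem_image_of_mem _ hz), hφ_apply]

theorem exists_strictMonoOn_orbital_commute {p q : ℚ} (hp : f p ≠ p) (hq : f q ≠ q)
    (hpq : p < f p ↔ q < f q) :
    ∃ φ : ℚ → ℚ, StrictMonoOn φ (orbital f p) ∧ φ '' orbital f p = orbital f q ∧
      ∀ x ∈ orbital f p, φ (f x) = f (φ x) := by
  rcases hp.lt_or_gt with hp' | hp'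
  · have hq' : f q < q := (hq.lt_or_gt).resolve_right (mt hpq.2 hp'.not_gt)
    obtain ⟨φ, hφ, hφimg, hφf⟩ := exists_strictMonoOn_orbital_commute_of_lt
      (lt_inv_apply_of_apply_lt hp') (lt_inv_apply_of_apply_lt hq')
    simp only [orbital_inv] at hφ hφimg hφf
    refine ⟨φ, hφ, hφimg, fun x hx => ?_⟩
    simpa using congrArg f (hφf (f x) (apply_mem_orbital hx)).symm
  · exact exists_strictMonoOn_orbital_commute_of_lt hp' (hpq.1 hp')

end Blocks

section Restriction

variable {f : G} {U V : Set ℚ} {a x : ℚ}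

def IsSaturated (f : G) (U : Set ℚ) : Prop := ∀ a ∈ U, orbital f a ⊆ U

theorem isSaturated_orbital (f : G) (a : ℚ) : IsSaturated f (orbital f a) :=
  fun _ hb => (orbital_eq_of_mem hb).subset

theorem IsSaturated.iUnion {ι : Sort*} {U : ι → Set ℚ} (hU : ∀ i, IsSaturated f (U i)) :
    IsSaturated f (⋃ i, U i) := fun a ha =>
  let ⟨i, hi⟩ := mem_iUnion.1 ha
  (hU i a hi).trans (subset_iUnion U i)

theorem IsSaturated.union (hU : IsSaturated f U) (hV : IsSaturated f V) :
    IsSaturated f (U ∪ V) := by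
  rw [union_eq_iUnion]
  exact IsSaturated.iUnion fun b => by cases b <;> assumption

theorem IsSaturated.strictMono_piecewise [DecidablePred (· ∈ U)] (hU : IsSaturated f U) :
    StrictMono (U.piecewise f id) := by
  intro x y hxy
  by_cases hx : x ∈ U <;> by_cases hy : y ∈ U <;>
    simp only [piecewise_eq_of_mem, piecewise_eq_of_notMem, hx, hy, not_false_eq_true, id]
  · exact f.strictMono hxy
  · refine lt_of_not_ge fun h => hy (hU x hx ?_)
    exact (ordConnected_orbital f x).out (self_mem_orbital f x)
      (apply_mem_orbital (self_mem_orbital f x)) ⟨hxy.le, h⟩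
  · refine lt_of_not_ge fun h => hx (hU y hy ?_)
    exact (ordConnected_orbital f y).out (apply_mem_orbital (self_mem_orbital f y))
      (self_mem_orbital f y) ⟨h, hxy.le⟩
  · exact hxy

theorem IsSaturated.surjective_piecewise [DecidablePred (· ∈ U)] (hU : IsSaturated f U) :
    Function.Surjective (U.piecewise f id) := by
  intro z
  by_cases hz : z ∈ U
  · have hz' : f⁻¹ z ∈ U := hU z hz (inv_apply_mem_orbital (self_mem_orbital f z))
    exact ⟨f⁻¹ z, by simp [hz']⟩
  · exact ⟨z, by simp [hz]⟩

noncomputable def restriction (f : G) (U : Set ℚ) (hU : IsSaturated f U) : G := by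
  classical
  exact StrictMono.orderIsoOfSurjective _ hU.strictMono_piecewise hU.surjective_piecewise

variable {hU : IsSaturated f U} {hV : IsSaturated f V}

theorem restriction_apply_of_mem (hx : x ∈ U) : restriction f U hU x = f x := by
  classical
  exact piecewise_eq_of_mem U f id hx

theorem restriction_apply_of_notMem (hx : x ∉ U) : restriction f U hU x = x := by
  classical
  exact piecewise_eq_of_notMem U f id hx

theorem zpow_apply_eq_of_eqOn {g : G} (hU : IsSaturated f U) (hg : EqOn g f U) (k : ℤ)
    (hx : x ∈ U) : (g ^ k) x = (f ^ k) x := by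
  induction k using Int.induction_on generalizing x with
  | zero => simp
  | succ n ih =>
    rw [zpow_add_one_apply', zpow_add_one_apply', hg hx,
      ih (hU x hx (apply_mem_orbital (self_mem_orbital f x)))]
  | pred n ih =>
    have hx' : f⁻¹ x ∈ U := hU x hx (inv_apply_mem_orbital (self_mem_orbital f x))
    have hinv : g⁻¹ x = f⁻¹ x := by
      conv_lhs => rw [← RelIso.apply_inv_self f x, ← hg hx', RelIso.inv_apply_self]
    rw [zpow_sub_one, zpow_sub_one, RelIso.mul_apply, RelIso.mul_apply, hinv, ih hx']

theorem zpow_apply_eq_self {g : G} (hx : g x = x) (k : ℤ) : (g ^ k) x = x := by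
  induction k using Int.induction_on with
  | zero => simp
  | succ n ih => rw [zpow_add_one_apply', hx, ih]
  | pred n ih =>
    have hinv : g⁻¹ x = x := by conv_lhs => rw [← hx, RelIso.inv_apply_self]
    rw [zpow_sub_one, RelIso.mul_apply, hinv, ih]

theorem orbital_restriction_of_mem (hx : x ∈ U) :
    orbital (restriction f U hU) x = orbital f x := by
  have hg : EqOn (restriction f U hU) f U := fun _ => restriction_apply_of_mem
  ext y
  simp only [orbital, orbRel, mem_ofPred_eq, zpow_apply_eq_of_eqOn hU hg _ hx]

theorem orbital_restriction_of_notMem (hx : x ∉ U) : orbital (restriction f U hU) x = {x} := by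
  ext y
  simp only [orbital, orbRel, mem_ofPred_eq, zpow_apply_eq_self (restriction_apply_of_notMem hx),
    exists_const, mem_singleton_iff]
  exact ⟨fun h => le_antisymm h.2 h.1, fun h => ⟨h.ge, h.le⟩⟩

theorem isNontrivialOrbital_restriction_iff {X : Set ℚ} :
    IsNontrivialOrbital (restriction f U hU) X ↔ ∃ a ∈ U, f a ≠ a ∧ X = orbital f a := by
  constructor
  · rintro ⟨⟨b, rfl⟩, c, hc, hcmove⟩
    have hcU : c ∈ U := by_contra fun h => hcmove (restriction_apply_of_notMem h)
    refine ⟨c, hcU, by rwa [restriction_apply_of_mem hcU] at hcmove, ?_⟩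
    rw [← orbital_restriction_of_mem (hU := hU) hcU, orbital_eq_of_mem hc]
    rfl
  · rintro ⟨a, ha, hfa, rfl⟩
    exact ⟨⟨a, (orbital_restriction_of_mem ha).symm⟩, a, self_mem_orbital f a,
      by rwa [restriction_apply_of_mem ha]⟩

theorem support_restriction : support (restriction f U hU) = U ∩ support f := by
  ext x
  by_cases hx : x ∈ U
  · simp [support, hx, restriction_apply_of_mem hx]
  · simp [support, hx, restriction_apply_of_notMem hx]

theorem isRestriction_restriction : IsRestriction (restriction f U hU) f :=
  ⟨support_restriction.trans_subset inter_subset_right, fun _ ha =>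
    restriction_apply_of_mem (support_restriction.subset ha).1⟩

theorem IsRestriction.of_support_subset {g₁ g : G} (h₁ : IsRestriction g₁ f)
    (h : IsRestriction g f) (hs : support g₁ ⊆ support g) : IsRestriction g₁ g :=
  ⟨hs, fun a ha => (h₁.2 a ha).trans (h.2 a (hs ha)).symm⟩

theorem restriction_ne_one (ha : a ∈ U) (hfa : f a ≠ a) : restriction f U hU ≠ 1 :=
  fun h => hfa (by rw [← restriction_apply_of_mem (hU := hU) ha, h, RelIso.one_apply])

theorem isBump_restriction_orbital (ha : f a ≠ a) :
    IsBump (restriction f (orbital f a) (isSaturated_orbital f a)) := by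
  refine ⟨restriction_ne_one (self_mem_orbital f a) ha, orbital f a,
    isNontrivialOrbital_restriction_iff.2 ⟨a, self_mem_orbital f a, ha, rfl⟩, fun X hX => ?_⟩
  obtain ⟨b, hb, -, rfl⟩ := isNontrivialOrbital_restriction_iff.1 hX
  exact orbital_eq_of_mem hb

theorem restriction_union_apply (hUV : Disjoint U V) (x : ℚ) :
    restriction f (U ∪ V) (hU.union hV) x = restriction f U hU (restriction f V hV x) := by
  by_cases hxV : x ∈ V
  · have hfx : f x ∉ U := disjoint_right.1 hUV (hV x hxV (apply_mem_orbital (self_mem_orbital f x)))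
    rw [restriction_apply_of_mem (Or.inr hxV), restriction_apply_of_mem hxV,
      restriction_apply_of_notMem hfx]
  · rw [restriction_apply_of_notMem hxV]
    by_cases hxU : x ∈ U
    · rw [restriction_apply_of_mem (Or.inl hxU), restriction_apply_of_mem hxU]
    · rw [restriction_apply_of_notMem (by simp [hxU, hxV]), restriction_apply_of_notMem hxU]

theorem apply_restriction_apply (H : G) (hHU : ∀ x, H x ∈ V ↔ x ∈ U)
    (hcomm : ∀ x ∈ U, H (f x) = f (H x)) (x : ℚ) :
    H (restriction f U hU x) = restriction f V hV (H x) := by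
  by_cases hx : x ∈ U
  · rw [restriction_apply_of_mem hx, restriction_apply_of_mem ((hHU x).2 hx), hcomm x hx]
  · rw [restriction_apply_of_notMem hx, restriction_apply_of_notMem (mt (hHU x).1 hx)]

end Restriction

theorem exists_strictMono_forall_eq {β : Type*} [Finite β] (c : ℕ → β) :
    ∃ e : ℕ → ℕ, StrictMono e ∧ ∀ m n, c (e m) = c (e n) := by
  obtain ⟨y, hy⟩ := Finite.exists_infinite_fiber c
  obtain ⟨e, he, hey⟩ := Filter.extraction_of_frequently_atTop (P := fun n => c n = y)
    (Nat.frequently_atTop_iff_infinite.2 (Set.infinite_coe_iff.1 hy))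
  exact ⟨e, he, fun m n => (hey m).trans (hey n).symm⟩

section Split

variable {f : G}

theorem IsNontrivialOrbital.exists_eq_orbital {X : Set ℚ} (h : IsNontrivialOrbital f X) :
    ∃ a, f a ≠ a ∧ X = orbital f a := by
  obtain ⟨⟨b, rfl⟩, a, ha, hfa⟩ := h
  exact ⟨a, hfa, (orbital_eq_of_mem ha).symm⟩

theorem exists_seq_of_infinite_nontrivialOrbitals
    (hf : {X : Set ℚ | IsNontrivialOrbital f X}.Infinite) :
    ∃ a : ℕ → ℚ, (∀ i, f (a i) ≠ a i) ∧ Pairwise (fun i j => ¬orbRel f (a i) (a j)) ∧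
      (StrictMono a ∨ StrictAnti a) ∧ (∀ i j, a i < f (a i) ↔ a j < f (a j)) ∧
      (∀ i j, (∃ c, IsLUB (orbital f (a i)) c) ↔ ∃ c, IsLUB (orbital f (a j)) c) ∧
      (∀ i j, (∃ c, IsGLB (orbital f (a i)) c) ↔ ∃ c, IsGLB (orbital f (a j)) c) := by
  set E := hf.natEmbedding
  choose a ha hEa using fun n => (E n).2.exists_eq_orbital
  have hsep : Pairwise fun i j => ¬orbRel f (a i) (a j) := fun i j hij h =>
    hij (E.injective (Subtype.ext (by rw [hEa i, hEa j, orbital_eq_of_mem h])))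
  have hinj : Function.Injective a := fun i j h =>
    by_contra fun hij => hsep hij (h ▸ orbRel.refl f (a i))
  obtain ⟨e₁, he₁⟩ := exists_increasing_or_nonincreasing_subseq (· < ·) a
  have hmono : StrictMono (a ∘ e₁) ∨ StrictAnti (a ∘ e₁) :=
    he₁.imp (fun h m n hmn => h m n hmn) fun h m n hmn =>
      lt_of_le_of_ne (not_lt.1 (h m n hmn)) (hinj.ne (e₁.injective.ne hmn.ne'))
  obtain ⟨e₂, he₂, hc⟩ := exists_strictMono_forall_eq fun n =>
    (a (e₁ n) < f (a (e₁ n)), ∃ c, IsLUB (orbital f (a (e₁ n))) c,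
      ∃ c, IsGLB (orbital f (a (e₁ n))) c)
  exact ⟨fun n => a (e₁ (e₂ n)), fun n => ha _,
    fun i j hij => hsep (e₁.injective.ne (he₂.injective.ne hij)),
    hmono.imp (fun h => h.comp he₂) fun h => h.comp_strictMono he₂,
    fun i j => iff_of_eq (congrArg (·.1) (hc i j)),
    fun i j => iff_of_eq (congrArg (·.2.1) (hc i j)),
    fun i j => iff_of_eq (congrArg (·.2.2) (hc i j))⟩

theorem exists_split_of_shift {b : ℕ → ℚ} (hmove : ∀ i, f (b i) ≠ b i)
    (hsep : Pairwise fun i j => ¬orbRel f (b i) (b j)) (H : G)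
    (hHB : ∀ i, H '' orbital f (b i) = orbital f (b (i + 1)))
    (hHf : ∀ i, ∀ x ∈ orbital f (b i), H (f x) = f (H x)) :
    ∃ g g₁ g₂ : G,
      IsRestriction g f ∧ g ≠ 1 ∧
      IsBump g₁ ∧ IsRestriction g₁ g ∧
      (∃ X : Set ℚ, IsNontrivialOrbital g X ∧ support g₁ = X) ∧
      support g₁ ∩ support g₂ = ∅ ∧
      (∀ a : ℚ, g a = g₁ (g₂ a)) ∧
      (∃ h : G, ∀ a : ℚ, g₂ a = h (g (h.symm a))) := by
  set U₂ := ⋃ i, orbital f (b (i + 1))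
  have hU₁ := isSaturated_orbital f (b 0)
  have hU₂ : IsSaturated f U₂ := IsSaturated.iUnion fun i => isSaturated_orbital f _
  have hU : orbital f (b 0) ∪ U₂ = ⋃ i, orbital f (b i) :=
    union_iUnion_nat_succ fun i => orbital f (b i)
  have hdisj : Disjoint (orbital f (b 0)) U₂ :=
    disjoint_iUnion_right.2 fun i => disjoint_orbital (hsep (i.succ_ne_zero.symm))
  have hmoved : ∀ i, orbital f (b i) ⊆ support f := fun i _ hx =>
    apply_ne_of_mem_orbital (hmove i) hx
  have hsupp₁ : support (restriction f _ hU₁) = orbital f (b 0) := by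
    rw [support_restriction, inter_eq_left.2 (hmoved 0)]
  have hsupp₂ : support (restriction f U₂ hU₂) = U₂ := by
    rw [support_restriction, inter_eq_left.2 (iUnion_subset fun i => hmoved (i + 1))]
  have hsupp : support (restriction f _ (hU₁.union hU₂)) = orbital f (b 0) ∪ U₂ := by
    rw [support_restriction, inter_eq_left.2 (hU ▸ iUnion_subset hmoved)]
  have hb₀ : b 0 ∈ orbital f (b 0) ∪ U₂ := Or.inl (self_mem_orbital f (b 0))
  refine ⟨restriction f _ (hU₁.union hU₂), restriction f _ hU₁, restriction f U₂ hU₂,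
    isRestriction_restriction, restriction_ne_one hb₀ (hmove 0),
    isBump_restriction_orbital (hmove 0),
    isRestriction_restriction.of_support_subset isRestriction_restriction
      (by rw [hsupp₁, hsupp]; exact subset_union_left),
    ⟨orbital f (b 0), isNontrivialOrbital_restriction_iff.2 ⟨b 0, hb₀, hmove 0, rfl⟩, hsupp₁⟩,
    by rw [hsupp₁, hsupp₂]; exact hdisj.inter_eq, restriction_union_apply hdisj, H, fun x => ?_⟩
  have hHU : ∀ y, H y ∈ U₂ ↔ y ∈ orbital f (b 0) ∪ U₂ := fun y => by
    rw [hU]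
    simp only [U₂, mem_iUnion, ← hHB, H.injective.mem_set_image]
  have hcomm : ∀ y ∈ orbital f (b 0) ∪ U₂, H (f y) = f (H y) := fun y hy => by
    rw [hU, mem_iUnion] at hy
    obtain ⟨i, hi⟩ := hy
    exact hHf i y hi
  rw [apply_restriction_apply H hHU hcomm, OrderIso.apply_symm_apply]

end Split

theorem exists_shift_conjugator {f : G} {a : ℕ → ℚ} (hmove : ∀ i, f (a i) ≠ a i)
    (hsep : Pairwise fun i j => ¬orbRel f (a i) (a j)) (hmono : StrictMono a ∨ StrictAnti a)
    (hdir : ∀ i j, a i < f (a i) ↔ a j < f (a j))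
    (hlub : ∀ i j, (∃ c, IsLUB (orbital f (a i)) c) ↔ ∃ c, IsLUB (orbital f (a j)) c)
    (hglb : ∀ i j, (∃ c, IsGLB (orbital f (a i)) c) ↔ ∃ c, IsGLB (orbital f (a j)) c) :
    ∃ H : G, ∀ i, H '' orbital f (a (2 * i + 1)) = orbital f (a (2 * (i + 1) + 1)) ∧
      ∀ x ∈ orbital f (a (2 * i + 1)), H (f x) = f (H x) := by
  choose φ hφ himg hcomm using fun i =>
    exists_strictMonoOn_orbital_commute (hmove (2 * i + 1)) (hmove (2 * i + 3)) (hdir _ _)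
  obtain ⟨H, hH⟩ : ∃ H : G, ∀ i, EqOn H (φ i) (orbital f (a (2 * i + 1))) := by
    rcases hmono with hmono | hanti
    · exact (isIncreasingIntervals_orbital hmono hmove hsep).exists_orderIso_eqOn_odd hlub hglb
        φ hφ himg
    · have : Countable ℚᵒᵈ := inferInstanceAs (Countable ℚ)
      obtain ⟨H, hH⟩ := (isIncreasingIntervals_orbital_of_strictAnti hanti hmove
        hsep).exists_orderIso_eqOn_odd hglb hlub φ (fun i => (hφ i).dual) himg
      exact ⟨H.dual, hH⟩
  exact ⟨H, fun i => ⟨(hH i).image_eq.trans (himg i), fun x hx => by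
    rw [hH i (apply_mem_orbital hx), hH i hx, hcomm i x hx]⟩⟩

/-- Lemma 2.1: if `f ∈ G` has infinitely many nontrivial orbitals, then it has a
non-identity restriction `g` which may be written as `g = g₁ ∘ g₂` where `g₁` is an
orbital of `g` (a bump whose support is a single nontrivial orbital of `g`, restricting `g`),
`g₁, g₂` have disjoint supports, and `g₂` is conjugate to `g` in `G`. -/
theorem infinitely_many_orbitals_split
    (f : G) (hf : {X : Set ℚ | IsNontrivialOrbital f X}.Infinite) :
    ∃ g g₁ g₂ : G,
      IsRestriction g f ∧ g ≠ 1 ∧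
      IsBump g₁ ∧ IsRestriction g₁ g ∧
      (∃ X : Set ℚ, IsNontrivialOrbital g X ∧ support g₁ = X) ∧
      support g₁ ∩ support g₂ = ∅ ∧
      (∀ a : ℚ, g a = g₁ (g₂ a)) ∧
      (∃ h : G, ∀ a : ℚ, g₂ a = h (g (h.symm a))) := by
  obtain ⟨a, hmove, hsep, hmono, hdir, hlub, hglb⟩ :=
    exists_seq_of_infinite_nontrivialOrbitals hf
  obtain ⟨H, hH⟩ := exists_shift_conjugator hmove hsep hmono hdir hlub hglb
  exact exists_split_of_shift (b := fun i => a (2 * i + 1)) (fun _ => hmove _)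
    (fun _ _ hij => hsep (by omega)) H (fun i => (hH i).1) fun i => (hH i).2
end

section
/- Let f ∈ G and let S ⊆ ℚ be a union of orbitals of f (i.e. S is closed under the orbital relation ~_f). Then the map g : ℚ → ℚ defined by g a = f a for a ∈ S and g a = a for a ∉ S is an order-automorphism of (ℚ,<). -/
open FirstOrder

lemma zpow_one_apply (f : G) (a : ℚ) : (f ^ (1:ℤ)) a = f a := by
  rw [zpow_one]

lemma zpow_zero_apply (f : G) (a : ℚ) : (f ^ (0:ℤ)) a = a := by
  rw [zpow_zero]; rfl

lemma zpow_neg_one_apply (f : G) (a : ℚ) : (f ^ (-1:ℤ)) a = f.symm a := by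
  rw [zpow_neg_one]; rfl

-- If `S ⊆ ℚ` is a union of orbitals of `f ∈ G` (closed under the orbital relation), then
-- the map agreeing with `f` on `S` and the identity off `S` is an order-automorphism of `(ℚ,<)`.
open Classical in
theorem restriction_to_union_of_orbitals
    (f : G) (S : Set ℚ) (hS : ∀ a ∈ S, ∀ b : ℚ, orbRel f a b → b ∈ S) :
    ∃ g : G, ∀ a : ℚ, g a = if a ∈ S then f a else a := by
  have hfS : ∀ a ∈ S, f a ∈ S := by
    intro a ha
    exact hS a ha (f a) ⟨1, 1, by rw [zpow_one_apply], by rw [zpow_one_apply]⟩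
  have hfS' : ∀ a ∈ S, f.symm a ∈ S := by
    intro a ha
    exact hS a ha (f.symm a)
      ⟨-1, -1, by rw [zpow_neg_one_apply], by rw [zpow_neg_one_apply]⟩
  -- key order facts
  have key1 : ∀ a ∈ S, ∀ b ∉ S, a < b → f a < b := by
    intro a ha b hb hab
    rcases lt_or_ge (f a) b with h | h
    · exact h
    · exact absurd (hS a ha b ⟨0, 1, by rw [zpow_zero_apply]; exact hab.le,
        by rw [zpow_one_apply]; exact h⟩) hb
  have key2 : ∀ a ∉ S, ∀ b ∈ S, a < b → a < f b := by
    intro a ha b hb hab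
    rcases lt_or_ge a (f b) with h | h
    · exact h
    · exact absurd (hS b hb a ⟨1, 0, by rw [zpow_one_apply]; exact h,
        by rw [zpow_zero_apply]; exact hab.le⟩) ha
  set gf : ℚ → ℚ := fun a => if a ∈ S then f a else a with hgf
  set gi : ℚ → ℚ := fun a => if a ∈ S then f.symm a else a with hgi
  have hmemiff : ∀ a : ℚ, f.symm a ∈ S ↔ a ∈ S := by
    intro a
    constructor
    · intro h
      have := hfS _ h
      rwa [f.apply_symm_apply] at this
    · exact hfS' a
  have hleft : Function.LeftInverse gi gf := by
    intro a
    by_cases ha : a ∈ S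
    · simp only [hgf, hgi, ha, if_pos, hfS a ha, f.symm_apply_apply]
    · simp only [hgf, hgi, ha, if_neg, not_false_iff]
  have hright : Function.RightInverse gi gf := by
    intro a
    by_cases ha : a ∈ S
    · simp only [hgf, hgi, ha, if_pos, (hmemiff a).mpr ha, f.apply_symm_apply]
    · simp only [hgf, hgi, ha, if_neg, not_false_iff]
  have hmono : StrictMono gf := by
    intro a b hab
    by_cases ha : a ∈ S <;> by_cases hb : b ∈ S
    · simpa [hgf, ha, hb] using f.strictMono hab
    · simpa [hgf, ha, hb] using key1 a ha b hb hab
    · simpa [hgf, ha, hb] using key2 a ha b hb hab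
    · simpa [hgf, ha, hb] using hab
  refine ⟨⟨⟨gf, gi, hleft, hright⟩, ?_⟩, fun a => rfl⟩
  intro a b
  exact hmono.le_iff_le
end

section
/- If f ∈ G satisfies a < f a for every a ∈ ℚ, and for all a, b ∈ ℚ there exists n ∈ ℕ with b ≤ f^n a, then f is conjugate in G to the translation x ↦ x + 1; that is, there exists g ∈ G with g(f(g⁻¹ x)) = x + 1 for all x ∈ ℚ. -/
open FirstOrder

/-- Any coterminal positive element of `G` (every point moved up, every orbit cofinal) is
conjugate in `G` to translation by `1`. -/
theorem coterminal_conjugate_translation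
    (f : G) (h1 : ∀ a : ℚ, a < f a)
    (h2 : ∀ a b : ℚ, ∃ n : ℕ, b ≤ (f ^ n) a) :
    ∃ g : G, ∀ x : ℚ, g (f (g⁻¹ x)) = x + 1 := by
  classical
  set c : ℚ := f 0 with hc_def
  have hc : (0:ℚ) < c := h1 0
  -- basic zpow application lemmas
  have zapp : ∀ (n : ℤ) (x : ℚ), (f ^ (n + 1)) x = f ((f ^ n) x) := by
    intro n x
    rw [add_comm, zpow_add, zpow_one]; rfl
  have zapp' : ∀ (n : ℤ) (x : ℚ), (f ^ (n + 1)) x = (f ^ n) (f x) := by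
    intro n x
    rw [zpow_add_one]; rfl
  set A : ℤ → ℚ := fun n => (f ^ n) 0 with hA_def
  have hA : StrictMono A := by
    apply strictMono_int_of_lt_succ
    intro n
    have := h1 (A n)
    simpa [hA_def, zapp n 0] using this
  -- the order isomorphism between open unit interval and (0, c)
  have hne1 : Nonempty (Set.Ioo (0:ℚ) 1) := (Set.nonempty_Ioo.2 one_pos).to_subtype
  have hnec : Nonempty (Set.Ioo (0:ℚ) c) := (Set.nonempty_Ioo.2 hc).to_subtype
  obtain ⟨e⟩ : Nonempty (Set.Ioo (0:ℚ) 1 ≃o Set.Ioo (0:ℚ) c) :=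
    Order.iso_of_countable_dense _ _
  set ι : ℚ → ℚ := fun t => if h : t ∈ Set.Ioo (0:ℚ) 1 then (e ⟨t, h⟩ : ℚ) else 0 with hι_def
  have hι0 : ι 0 = 0 := by
    rw [hι_def]; simp
  have hι_nonneg : ∀ t : ℚ, 0 ≤ ι t := by
    intro t
    rw [hι_def]
    by_cases h : t ∈ Set.Ioo (0:ℚ) 1
    · simpa [h] using le_of_lt (e ⟨t, h⟩).2.1
    · simp [h]
  have hι_lt_c : ∀ t : ℚ, ι t < c := by
    intro t
    rw [hι_def]
    by_cases h : t ∈ Set.Ioo (0:ℚ) 1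
    · simpa [h] using (e ⟨t, h⟩).2.2
    · simpa [h] using hc
  have hιmono : ∀ s t : ℚ, 0 ≤ s → t < 1 → s < t → ι s < ι t := by
    intro s t hs ht hst
    have htm : t ∈ Set.Ioo (0:ℚ) 1 := ⟨lt_of_le_of_lt hs hst, ht⟩
    rcases eq_or_lt_of_le hs with h0 | h0
    · have : ι s = 0 := by rw [← h0, hι0]
      rw [this, hι_def]
      simpa [htm] using (e ⟨t, htm⟩).2.1
    · have hsm : s ∈ Set.Ioo (0:ℚ) 1 := ⟨h0, lt_trans hst ht⟩
      rw [hι_def]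
      simp only [hsm, htm, dif_pos]
      have : (⟨s, hsm⟩ : Set.Ioo (0:ℚ) 1) < ⟨t, htm⟩ := Subtype.mk_lt_mk.2 hst
      exact_mod_cast e.strictMono this
  have hιsurj : ∀ x : ℚ, 0 ≤ x → x < c → ∃ t : ℚ, 0 ≤ t ∧ t < 1 ∧ ι t = x := by
    intro x hx0 hxc
    rcases eq_or_lt_of_le hx0 with h0 | h0
    · exact ⟨0, le_refl 0, one_pos, by rw [hι0, ← h0]⟩
    · have hxm : x ∈ Set.Ioo (0:ℚ) c := ⟨h0, hxc⟩
      set u := e.symm ⟨x, hxm⟩ with hu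
      refine ⟨(u : ℚ), le_of_lt u.2.1, u.2.2, ?_⟩
      rw [hι_def]
      simp only [u.2, dif_pos, Subtype.coe_prop]
      have : (⟨(u : ℚ), u.2⟩ : Set.Ioo (0:ℚ) 1) = u := Subtype.coe_eta u u.2
      rw [this, hu, e.apply_symm_apply]
  -- the candidate inverse conjugator
  set k : ℚ → ℚ := fun y => (f ^ ⌊y⌋) (ι (Int.fract y)) with hk_def
  have hkmono : StrictMono k := by
    intro y z hyz
    have hfl : ⌊y⌋ ≤ ⌊z⌋ := Int.floor_le_floor hyz.le
    rcases eq_or_lt_of_le hfl with heq | hlt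
    · have hfr : Int.fract y < Int.fract z := by
        rw [Int.fract, Int.fract, heq]
        exact sub_lt_sub_right hyz _
      have : ι (Int.fract y) < ι (Int.fract z) :=
        hιmono _ _ (Int.fract_nonneg y) (Int.fract_lt_one z) hfr
      rw [hk_def]
      simp only [heq]
      exact (f ^ ⌊z⌋).strictMono this
    · have h1' : k y < (f ^ ⌊y⌋) c :=
        (f ^ ⌊y⌋).strictMono (hι_lt_c _)
      have h2' : (f ^ ⌊y⌋) c = A (⌊y⌋ + 1) := by
        rw [hA_def]; exact (zapp' ⌊y⌋ 0).symm
      have h3' : A (⌊y⌋ + 1) ≤ A ⌊z⌋ := hA.monotone (by omega)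
      have h4' : A ⌊z⌋ ≤ k z := (f ^ ⌊z⌋).monotone (hι_nonneg _)
      calc k y < (f ^ ⌊y⌋) c := h1'
        _ = A (⌊y⌋ + 1) := h2'
        _ ≤ A ⌊z⌋ := h3'
        _ ≤ k z := h4'
  have hksurj : Function.Surjective k := by
    intro x
    -- lower bound : some A n ≤ x
    have hlow : ∃ n : ℤ, A n ≤ x := by
      obtain ⟨n, hn⟩ := h2 x 0
      refine ⟨-(n : ℤ), ?_⟩
      have hn' : (0:ℚ) ≤ (f ^ (n : ℤ)) x := by rwa [zpow_natCast]
      have := (f ^ (-(n:ℤ))).monotone hn'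
      have heq : (f ^ (-(n:ℤ))) ((f ^ (n:ℤ)) x) = x := by
        have : ((f ^ (-(n:ℤ))) * (f ^ (n:ℤ))) x = x := by
          rw [← zpow_add, neg_add_cancel, zpow_zero]; rfl
        exact this
      rw [heq] at this
      exact this
    -- upper bound : x < A m for some m
    have hupp : ∀ z : ℤ, A z ≤ x → z ≤ (h2 0 (x+1)).choose := by
      intro z hz
      have hm : x + 1 ≤ (f ^ (h2 0 (x+1)).choose) 0 := (h2 0 (x+1)).choose_spec
      have hm' : x < A ((h2 0 (x+1)).choose : ℤ) := by
        rw [hA_def]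
        simp only [zpow_natCast]
        linarith
      by_contra hcon
      push_neg at hcon
      exact absurd (lt_of_le_of_lt hz hm') (not_lt.2 (hA.monotone hcon.le))
    obtain ⟨n, hn, hnmax⟩ := Int.exists_greatest_of_bdd ⟨_, hupp⟩ hlow
    have hxlt : x < A (n + 1) := by
      by_contra hcon
      push_neg at hcon
      have := hnmax (n + 1) hcon
      omega
    -- pull back into [0, c)
    set u := (f ^ n).symm x with hu_def
    have hu0 : 0 ≤ u := by
      have : (f ^ n).symm (A n) ≤ (f ^ n).symm x := (f ^ n).symm.monotone hn
      rwa [hA_def, OrderIso.symm_apply_apply] at this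
    have huc : u < c := by
      have hAn1 : A (n + 1) = (f ^ n) c := by rw [hA_def]; exact zapp' n 0
      have : (f ^ n).symm x < (f ^ n).symm ((f ^ n) c) := by
        apply (f ^ n).symm.strictMono
        rwa [← hAn1]
      rwa [OrderIso.symm_apply_apply] at this
    obtain ⟨t, ht0, ht1, hιt⟩ := hιsurj u hu0 huc
    refine ⟨(n : ℚ) + t, ?_⟩
    have hfl : ⌊(n : ℚ) + t⌋ = n := by
      rw [Int.floor_intCast_add, Int.floor_eq_zero_iff.2 ⟨ht0, ht1⟩, add_zero]
    have hfr : Int.fract ((n : ℚ) + t) = t := by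
      rw [Int.fract_intCast_add, Int.fract_eq_self.2 ⟨ht0, ht1⟩]
    rw [hk_def]
    simp only [hfl, hfr, hιt, hu_def, OrderIso.apply_symm_apply]
  -- the conjugating isomorphism
  set iso : ℚ ≃o ℚ := StrictMono.orderIsoOfSurjective k hkmono hksurj with hiso
  have hiso_coe : ∀ y, iso y = k y := by
    intro y
    rw [hiso, StrictMono.coe_orderIsoOfSurjective]
  have hkey : ∀ y : ℚ, f (iso y) = iso (y + 1) := by
    intro y
    rw [hiso_coe, hiso_coe, hk_def]
    simp only []
    have hfl : ⌊y + 1⌋ = ⌊y⌋ + 1 := by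
      rw [Int.floor_add_one]
    have hfr : Int.fract (y + 1) = Int.fract y := Int.fract_add_one y
    rw [hfl, hfr, zapp]
  refine ⟨iso.symm, ?_⟩
  intro x
  have hinv : (iso.symm)⁻¹ x = iso x := by
    show iso.symm.symm x = iso x
    rw [OrderIso.symm_symm]
  rw [hinv]
  show iso.symm (f (iso x)) = x + 1
  rw [hkey, OrderIso.symm_apply_apply]
end

section
/- There exist f, g ∈ G such that: a < f a and a < g a for every a ∈ ℚ; for all a, b ∈ ℚ there exist m, n ∈ ℕ with b ≤ f^m a and b ≤ g^n a (so f and g are coterminal); f ∘ g = g ∘ f; and the joint centralizer {h ∈ G : h∘f = f∘h and h∘g = g∘h} is commutative (any two of its elements commute). -/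
open FirstOrder

noncomputable section GaugeAux

/-- The additive subgroup ℤ + ℤ√2 of ℝ. -/
def Agrp : AddSubgroup ℝ := AddSubgroup.closure {1, Real.sqrt 2}

lemma one_mem_Agrp : (1 : ℝ) ∈ Agrp := AddSubgroup.subset_closure (by simp)
lemma sqrt2_mem_Agrp : Real.sqrt 2 ∈ Agrp := AddSubgroup.subset_closure (by simp)

lemma dense_Agrp : Dense (Agrp : Set ℝ) := by
  rcases Agrp.dense_or_cyclic with h | ⟨a, ha⟩
  · exact h
  · exfalso
    have h1 : (1 : ℝ) ∈ AddSubgroup.closure ({a} : Set ℝ) := ha ▸ one_mem_Agrp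
    have h2 : Real.sqrt 2 ∈ AddSubgroup.closure ({a} : Set ℝ) := ha ▸ sqrt2_mem_Agrp
    rw [AddSubgroup.mem_closure_singleton] at h1 h2
    obtain ⟨m, hm⟩ := h1
    obtain ⟨n, hn⟩ := h2
    rw [zsmul_eq_mul] at hm hn
    have hm0 : m ≠ 0 := by rintro rfl; simp at hm
    have hm0' : (m : ℝ) ≠ 0 := Int.cast_ne_zero.mpr hm0
    have key : (m : ℝ) * Real.sqrt 2 = n := by linear_combination (n:ℝ) * hm - (m:ℝ) * hn
    refine irrational_sqrt_two ⟨(n : ℚ) / (m : ℚ), ?_⟩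
    push_cast
    rw [div_eq_iff hm0']
    linear_combination -key

lemma countable_Agrp : (Agrp : Set ℝ).Countable := by
  have hsub : (Agrp : Set ℝ) ⊆
      Set.range (fun p : ℤ × ℤ => (p.1 : ℝ) + (p.2 : ℝ) * Real.sqrt 2) := by
    intro x hx
    rcases AddSubgroup.mem_closure_pair.mp hx with ⟨m, n, h⟩
    exact ⟨(m, n), by simpa [zsmul_eq_mul] using h⟩
  exact (Set.countable_range _).mono hsub

instance : Countable ↥Agrp := countable_Agrp.to_subtype

instance : DenselyOrdered ↥Agrp := by
  constructor
  rintro ⟨x, hx⟩ ⟨y, hy⟩ h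
  obtain ⟨z, hz, hz1, hz2⟩ := dense_Agrp.exists_between (show x < y from h)
  exact ⟨⟨z, hz⟩, hz1, hz2⟩

instance : NoMaxOrder ↥Agrp := by
  constructor
  intro x
  refine ⟨x + ⟨1, one_mem_Agrp⟩, ?_⟩
  show (x : ℝ) < (x : ℝ) + 1
  linarith

instance : NoMinOrder ↥Agrp := by
  constructor
  intro x
  refine ⟨x + ⟨-1, neg_mem one_mem_Agrp⟩, ?_⟩
  show (x : ℝ) + (-1) < (x : ℝ)
  linarith

/-- An order isomorphism between `Agrp` and `ℚ`. -/
def eIso : ↥Agrp ≃o ℚ := (Order.iso_of_countable_dense ↥Agrp ℚ).some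

/-- Translation by `t`, transported to `ℚ` along `eIso`. -/
def Fmap (t : ↥Agrp) : ℚ ≃o ℚ := (eIso.symm.trans (OrderIso.addRight t)).trans eIso

lemma Fmap_apply (t : ↥Agrp) (a : ℚ) : Fmap t a = eIso (eIso.symm a + t) := rfl

lemma Fmap_pos (t : ↥Agrp) (ht : 0 < (t : ℝ)) (a : ℚ) : a < Fmap t a := by
  conv_lhs => rw [← eIso.apply_symm_apply a]
  rw [Fmap_apply, eIso.lt_iff_lt]
  show ((eIso.symm a : ℝ)) < (eIso.symm a : ℝ) + t
  linarith

lemma Fmap_pow (t : ↥Agrp) (a : ℚ) : ∀ n : ℕ, ((Fmap t) ^ n) a = eIso (eIso.symm a + n • t) := by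
  intro n
  induction n with
  | zero => simp
  | succ n ih =>
    rw [pow_succ']
    show (Fmap t) (((Fmap t) ^ n) a) = _
    rw [ih, Fmap_apply, eIso.symm_apply_apply, succ_nsmul, add_assoc]

lemma Fmap_coterminal (t : ↥Agrp) (ht : 1 ≤ (t : ℝ)) (a b : ℚ) :
    ∃ m : ℕ, b ≤ ((Fmap t) ^ m) a := by
  obtain ⟨m, hm⟩ := exists_nat_ge ((eIso.symm b : ℝ) - (eIso.symm a : ℝ))
  refine ⟨m, ?_⟩
  conv_lhs => rw [← eIso.apply_symm_apply b]
  rw [Fmap_pow, eIso.le_iff_le]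
  show ((eIso.symm b : ℝ)) ≤ ((eIso.symm a + m • t : ↥Agrp) : ℝ)
  push_cast
  have h1 : (m : ℝ) * 1 ≤ (m : ℝ) * (t : ℝ) := by
    apply mul_le_mul_of_nonneg_left ht (by positivity)
  rw [nsmul_eq_mul]
  linarith

lemma Fmap_comm (s t : ↥Agrp) (a : ℚ) : Fmap s (Fmap t a) = Fmap t (Fmap s a) := by
  simp only [Fmap_apply, eIso.symm_apply_apply]
  rw [add_right_comm]

/-- Pull an element of `G` back to a map on `Agrp`. -/
def Hmap (h : ℚ ≃o ℚ) (x : ↥Agrp) : ↥Agrp := eIso.symm (h (eIso x))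

lemma Hmap_strictMono (h : ℚ ≃o ℚ) : StrictMono (Hmap h) := fun x y hxy => by
  simpa [Hmap] using hxy

lemma Hmap_comm_gen (h : ℚ ≃o ℚ) (t : ↥Agrp) (hc : ∀ a : ℚ, h (Fmap t a) = Fmap t (h a))
    (x : ↥Agrp) : Hmap h (x + t) = Hmap h x + t := by
  have := hc (eIso x)
  rw [Fmap_apply, Fmap_apply, eIso.symm_apply_apply] at this
  have := congrArg eIso.symm this
  rw [eIso.symm_apply_apply] at this
  simpa [Hmap] using this

lemma Hmap_add (h : ℚ ≃o ℚ)
    (hf : ∀ a : ℚ, h (Fmap ⟨1, one_mem_Agrp⟩ a) = Fmap ⟨1, one_mem_Agrp⟩ (h a))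
    (hg : ∀ a : ℚ, h (Fmap ⟨Real.sqrt 2, sqrt2_mem_Agrp⟩ a) = Fmap ⟨Real.sqrt 2, sqrt2_mem_Agrp⟩ (h a))
    (t : ↥Agrp) (x : ↥Agrp) : Hmap h (x + t) = Hmap h x + t := by
  obtain ⟨r, hr⟩ := t
  revert x
  refine AddSubgroup.closure_induction (p := fun r hr => ∀ x : ↥Agrp, Hmap h (x + ⟨r, hr⟩) = Hmap h x + ⟨r, hr⟩)
    ?_ ?_ ?_ ?_ hr
  · rintro r (rfl | rfl)
    · exact Hmap_comm_gen h _ hf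
    · exact Hmap_comm_gen h _ hg
  · intro x
    show Hmap h (x + 0) = Hmap h x + 0
    rw [add_zero, add_zero]
  · intro a b ha hb pa pb x
    have : (⟨a + b, add_mem ha hb⟩ : ↥Agrp) = ⟨a, ha⟩ + ⟨b, hb⟩ := rfl
    rw [this, ← add_assoc, pb, pa, add_assoc]
  · intro a ha pa x
    have key := pa (x - ⟨a, ha⟩)
    have h1 : (x - ⟨a, ha⟩) + ⟨a, ha⟩ = x := by abel
    rw [h1] at key
    have : (⟨-a, neg_mem ha⟩ : ↥Agrp) = -⟨a, ha⟩ := rfl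
    rw [this, key]
    abel

lemma Hmap_translation (h : ℚ ≃o ℚ)
    (hadd : ∀ t x : ↥Agrp, Hmap h (x + t) = Hmap h x + t) (x : ↥Agrp) :
    (Hmap h x : ℝ) = (x : ℝ) + (Hmap h 0 : ℝ) := by
  -- first: the displacement is weakly monotone-invariant
  have main : ∀ x y : ↥Agrp, (Hmap h x : ℝ) - x ≤ (Hmap h y : ℝ) - y := by
    intro x y
    by_contra hlt
    push_neg at hlt
    set δ : ℝ := ((Hmap h x : ℝ) - x) - ((Hmap h y : ℝ) - y) with hδ
    have hδpos : 0 < δ := by simp [hδ]; linarith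
    obtain ⟨t, ht, ht1, ht2⟩ := dense_Agrp.exists_between
      (show (x : ℝ) - y < (x : ℝ) - y + δ by linarith)
    have hgt : x < y + (⟨t, ht⟩ : ↥Agrp) := by
      show (x : ℝ) < (y : ℝ) + t
      linarith
    have := Hmap_strictMono h hgt
    rw [hadd] at this
    have : (Hmap h x : ℝ) < (Hmap h y : ℝ) + t := this
    linarith
  have h1 := main x 0
  have h2 := main 0 x
  push_cast at h1 h2 ⊢
  linarith

theorem exists_gauge_pair' :
    ∃ f g : ℚ ≃o ℚ,
      (∀ a : ℚ, a < f a) ∧ (∀ a : ℚ, a < g a) ∧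
      (∀ a b : ℚ, ∃ m : ℕ, b ≤ (f ^ m) a) ∧
      (∀ a b : ℚ, ∃ n : ℕ, b ≤ (g ^ n) a) ∧
      (∀ a : ℚ, f (g a) = g (f a)) ∧
      (∀ h₁ h₂ : ℚ ≃o ℚ,
        ((∀ a : ℚ, h₁ (f a) = f (h₁ a)) ∧ (∀ a : ℚ, h₁ (g a) = g (h₁ a))) →
        ((∀ a : ℚ, h₂ (f a) = f (h₂ a)) ∧ (∀ a : ℚ, h₂ (g a) = g (h₂ a))) →
        ∀ a : ℚ, h₁ (h₂ a) = h₂ (h₁ a)) := by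
  have sqrt2_pos : (0 : ℝ) < Real.sqrt 2 := Real.sqrt_pos.mpr (by norm_num)
  have sqrt2_ge_one : (1 : ℝ) ≤ Real.sqrt 2 := by
    rw [show (1:ℝ) = Real.sqrt 1 from (Real.sqrt_one).symm]
    exact Real.sqrt_le_sqrt (by norm_num)
  set t₁ : ↥Agrp := ⟨1, one_mem_Agrp⟩
  set t₂ : ↥Agrp := ⟨Real.sqrt 2, sqrt2_mem_Agrp⟩
  refine ⟨Fmap t₁, Fmap t₂, Fmap_pos t₁ (by norm_num), Fmap_pos t₂ sqrt2_pos,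
    Fmap_coterminal t₁ (by norm_num), Fmap_coterminal t₂ sqrt2_ge_one,
    Fmap_comm t₁ t₂, ?_⟩
  rintro h₁ h₂ ⟨hf1, hg1⟩ ⟨hf2, hg2⟩ a
  have hadd1 := Hmap_add h₁ hf1 hg1
  have hadd2 := Hmap_add h₂ hf2 hg2
  have ht1 := Hmap_translation h₁ hadd1
  have ht2 := Hmap_translation h₂ hadd2
  have e1 : ∀ (h : ℚ ≃o ℚ) (b : ℚ), h b = eIso (Hmap h (eIso.symm b)) := by
    intro h b; simp [Hmap]
  have e2 : ∀ h : ℚ ≃o ℚ, eIso.symm (h a) = Hmap h (eIso.symm a) := by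
    intro h; simp [Hmap]
  rw [e1 h₁ (h₂ a), e2 h₂, e1 h₂ (h₁ a), e2 h₁]
  refine congrArg eIso (Subtype.ext ?_)
  rw [ht1 (Hmap h₂ (eIso.symm a)), ht2 (eIso.symm a),
    ht2 (Hmap h₁ (eIso.symm a)), ht1 (eIso.symm a)]
  ring

end GaugeAux


/-- There exist commuting positive coterminal elements `f, g ∈ G` whose joint centralizer is
commutative (a `gauge` pair). -/
theorem exists_gauge_pair :
    ∃ f g : G,
      (∀ a : ℚ, a < f a) ∧ (∀ a : ℚ, a < g a) ∧
      (∀ a b : ℚ, ∃ m : ℕ, b ≤ (f ^ m) a) ∧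
      (∀ a b : ℚ, ∃ n : ℕ, b ≤ (g ^ n) a) ∧
      (∀ a : ℚ, f (g a) = g (f a)) ∧
      (∀ h₁ h₂ : G,
        ((∀ a : ℚ, h₁ (f a) = f (h₁ a)) ∧ (∀ a : ℚ, h₁ (g a) = g (h₁ a))) →
        ((∀ a : ℚ, h₂ (f a) = f (h₂ a)) ∧ (∀ a : ℚ, h₂ (g a) = g (h₂ a))) →
        ∀ a : ℚ, h₁ (h₂ a) = h₂ (h₁ a)) :=
  exists_gauge_pair'
end

section
/- Let f, g ∈ G satisfy: a < f a and a < g a for every a ∈ ℚ; for all a, b ∈ ℚ there exist m, n ∈ ℕ with b ≤ f^m a and b ≤ g^n a; f ∘ g = g ∘ f; and the joint centralizer C = {h ∈ G : h∘f = f∘h and h∘g = g∘h} is commutative. Then C is countable. -/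
open FirstOrder

/-- The joint centralizer in `G` of a pair `f, g`. -/
def jointCentralizer (f g : G) : Set G :=
  {h : G | (∀ a : ℚ, h (f a) = f (h a)) ∧ (∀ a : ℚ, h (g a) = g (h a))}

/-!
An element `k` of the joint centralizer `C` that fixes a point `c` is trivial; hence `C` acts
freely on `ℚ` and `k ↦ k 0` is injective on `C`.

Suppose `k` also moves `a`. The fixed points `f^m c` of `k` are cofinal, so the `k`-orbital `I`
of `a` is bounded and no nontrivial power of `f` preserves it. Therefore the elements of
`⟨f, g⟩ = {f^m g^n}` preserving `I` form a cyclic group `⟨u⟩`, and some interval `J ⊆ I`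
(`(a, k a)` if `u` is trivial on `I`, otherwise `(y, u y)` or `(y, u⁻¹ y)`) is moved off itself or
fixed pointwise by each element of `⟨f, g⟩`. Two non-commuting automorphisms of `J ≅ ℚ`, copied
equivariantly onto all `⟨f, g⟩`-translates of `J`, are then non-commuting elements of `C`.
-/

open Set

theorem zpow_apply_eq_self_s18 {σ : G} {x : ℚ} (h : σ x = x) (n : ℤ) : (σ ^ n) x = x :=
  zpow_mem (MulAction.mem_stabilizer_iff.2 h : σ ∈ MulAction.stabilizer G x) n

theorem monotone_pow_apply {σ : G} (hσ : ∀ x, x ≤ σ x) (x : ℚ) :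
    Monotone fun n : ℕ => (σ ^ n) x :=
  monotone_nat_of_le_succ fun n => by rw [pow_succ', RelIso.mul_apply]; exact hσ _

theorem Commute.apply_eq {σ τ : G} (h : Commute σ τ) (x : ℚ) : σ (τ x) = τ (σ x) :=
  DFunLike.congr_fun h.eq x

section OrbitalRelation

variable {k : G}

theorem orbRel_refl (k : G) (x : ℚ) : orbRel k x x := ⟨0, 0, by simp, by simp⟩

theorem orbRel_symm {x y : ℚ} (h : orbRel k x y) : orbRel k y x := by
  obtain ⟨m, n, hm, hn⟩ := h
  refine ⟨-n, -m, ?_, ?_⟩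
  · simpa using (k ^ (-n)).monotone hn
  · simpa using (k ^ (-m)).monotone hm

theorem orbRel_trans {x y z : ℚ} (h : orbRel k x y) (h' : orbRel k y z) : orbRel k x z := by
  obtain ⟨m, n, hm, hn⟩ := h
  obtain ⟨m', n', hm', hn'⟩ := h'
  refine ⟨m' + m, n' + n, ?_, ?_⟩
  · rw [zpow_add, RelIso.mul_apply]
    exact ((k ^ m').monotone hm).trans hm'
  · rw [zpow_add, RelIso.mul_apply]
    exact hn'.trans ((k ^ n').monotone hn)

theorem orbRel_of_le_of_le {x y y' z : ℚ} (h : orbRel k x y) (h' : orbRel k x y')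
    (hy : y ≤ z) (hy' : z ≤ y') : orbRel k x z := by
  obtain ⟨m, -, hm, -⟩ := h
  obtain ⟨-, n, -, hn⟩ := h'
  exact ⟨m, n, hm.trans hy, hy'.trans hn⟩

theorem orbRel_apply {W : G} (hW : Commute W k) {x y : ℚ} (h : orbRel k x y) :
    orbRel k (W x) (W y) := by
  obtain ⟨m, n, hm, hn⟩ := h
  refine ⟨m, n, ?_, ?_⟩
  · simpa only [(hW.zpow_right m).apply_eq] using W.monotone hm
  · simpa only [(hW.zpow_right n).apply_eq] using W.monotone hn

theorem orbRel_lt_of_apply_eq {a b x : ℚ} (hb : k b = b) (hab : a < b) (h : orbRel k a x) :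
    x < b := by
  obtain ⟨-, n, -, hn⟩ := h
  exact hn.trans_lt (zpow_apply_eq_self_s18 hb n ▸ (k ^ n).strictMono hab)

end OrbitalRelation

section ClosurePair

variable {H : Type*} [Group H] {f g : H}

theorem Commute.zpow_mul_zpow_mul_zpow_mul_zpow (hfg : Commute f g) (m n m' n' : ℤ) :
    f ^ m * g ^ n * (f ^ m' * g ^ n') = f ^ (m + m') * g ^ (n + n') := by
  rw [mul_assoc, ← mul_assoc (g ^ n), ← (hfg.zpow_zpow m' n).eq]
  simp only [zpow_add, mul_assoc]

theorem Commute.inv_zpow_mul_zpow (hfg : Commute f g) (m n : ℤ) :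
    (f ^ m * g ^ n)⁻¹ = f ^ (-m) * g ^ (-n) := by
  rw [mul_inv_rev, zpow_neg, zpow_neg, ← (hfg.zpow_zpow m n).inv_inv.eq]

theorem Subgroup.mem_closure_pair_of_commute (hfg : Commute f g) {W : H} :
    W ∈ Subgroup.closure {f, g} ↔ ∃ m n : ℤ, f ^ m * g ^ n = W := by
  refine ⟨fun hW => ?_, ?_⟩
  · induction hW using Subgroup.closure_induction with
    | mem W hW =>
      rcases hW with rfl | rfl
      exacts [⟨1, 0, by simp⟩, ⟨0, 1, by simp⟩]
    | one => exact ⟨0, 0, by simp⟩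
    | mul V W _ _ hV hW =>
      obtain ⟨m, n, rfl⟩ := hV
      obtain ⟨m', n', rfl⟩ := hW
      exact ⟨m + m', n + n', (hfg.zpow_mul_zpow_mul_zpow_mul_zpow m n m' n').symm⟩
    | inv W _ hW =>
      obtain ⟨m, n, rfl⟩ := hW
      exact ⟨-m, -n, (hfg.inv_zpow_mul_zpow m n).symm⟩
  · rintro ⟨m, n, rfl⟩
    exact mul_mem (zpow_mem (Subgroup.subset_closure (by simp)) m)
      (zpow_mem (Subgroup.subset_closure (by simp)) n)

theorem exists_inf_closure_pair_eq_zpowers (hfg : Commute f g) {S : Subgroup H}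
    (hS : Disjoint S (Subgroup.zpowers f)) :
    ∃ u, S ⊓ Subgroup.closure {f, g} = Subgroup.zpowers u := by
  -- The `g`-exponents of `S ⊓ ⟨f, g⟩`; by disjointness from `⟨f⟩` they determine the element.
  let T : AddSubgroup ℤ :=
    { carrier := {n | ∃ m : ℤ, f ^ m * g ^ n ∈ S}
      zero_mem' := ⟨0, by simp [one_mem]⟩
      add_mem' := by
        rintro n n' ⟨m, hm⟩ ⟨m', hm'⟩
        exact ⟨m + m', hfg.zpow_mul_zpow_mul_zpow_mul_zpow m n m' n' ▸ mul_mem hm hm'⟩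
      neg_mem' := by
        rintro n ⟨m, hm⟩
        exact ⟨-m, hfg.inv_zpow_mul_zpow m n ▸ inv_mem hm⟩ }
  obtain ⟨e, he⟩ := Int.subgroup_cyclic T
  obtain ⟨m₀, hm₀⟩ : e ∈ T := he ▸ AddSubgroup.mem_closure_singleton_self e
  refine ⟨f ^ m₀ * g ^ e, le_antisymm ?_ ?_⟩
  · rintro _ ⟨hW, hW'⟩
    obtain ⟨m, n, rfl⟩ := (Subgroup.mem_closure_pair_of_commute hfg).1 hW'
    have hn : n ∈ AddSubgroup.closure {e} := he ▸ (⟨m, hW⟩ : n ∈ T)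
    obtain ⟨j, rfl⟩ := AddSubgroup.mem_closure_singleton.1 hn
    have hu : (f ^ m₀ * g ^ e) ^ j = f ^ (m₀ * j) * g ^ (j • e) := by
      rw [(hfg.zpow_zpow m₀ e).mul_zpow, ← zpow_mul, ← zpow_mul, smul_eq_mul, mul_comm j]
    have hquot : f ^ m * g ^ (j • e) * ((f ^ m₀ * g ^ e) ^ j)⁻¹ = f ^ (m - m₀ * j) := by
      rw [hu, hfg.inv_zpow_mul_zpow, hfg.zpow_mul_zpow_mul_zpow_mul_zpow]
      simp [sub_eq_add_neg]
    have hone := Subgroup.disjoint_def.1 hS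
      (mul_mem hW (inv_mem (zpow_mem hm₀ j))) (hquot ▸ Subgroup.zpow_mem_zpowers f _)
    exact ⟨j, (mul_inv_eq_one.1 hone).symm⟩
  · exact Subgroup.zpowers_le.2
      ⟨hm₀, (Subgroup.mem_closure_pair_of_commute hfg).2 ⟨m₀, e, rfl⟩⟩

end ClosurePair

def orbitalStabilizer (k : G) (a : ℚ) : Subgroup G where
  carrier := {W | Commute W k ∧ orbRel k a (W a)}
  one_mem' := ⟨Commute.one_left k, orbRel_refl k a⟩
  mul_mem' := fun {V _} hV hW => ⟨hV.1.mul_left hW.1, orbRel_trans hV.2 (orbRel_apply hV.1 hW.2)⟩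
  inv_mem' := fun {W} hW =>
    ⟨hW.1.inv_left, by simpa using orbRel_symm (orbRel_apply hW.1.inv_left hW.2)⟩

section OrbitalStabilizer

variable {k : G} {a : ℚ}

theorem mem_orbitalStabilizer_of_orbRel {W : G} (hW : Commute W k) {x : ℚ} (hx : orbRel k a x)
    (hWx : orbRel k a (W x)) : W ∈ orbitalStabilizer k a :=
  ⟨hW, orbRel_trans hWx (orbRel_symm (orbRel_apply hW hx))⟩

theorem orbRel_apply_of_mem_orbitalStabilizer {W : G} (hW : W ∈ orbitalStabilizer k a) {x : ℚ}
    (hx : orbRel k a x) : orbRel k a (W x) :=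
  orbRel_trans hW.2 (orbRel_apply hW.1 hx)

theorem disjoint_orbitalStabilizer_zpowers {f : G} (hf : ∀ x, x < f x)
    (hf' : ∀ x y, ∃ m : ℕ, y ≤ (f ^ m) x) (hfk : Commute f k) {c : ℚ} (hc : k c = c) (a : ℚ) :
    Disjoint (orbitalStabilizer k a) (Subgroup.zpowers f) := by
  obtain ⟨M, hM⟩ := hf' c a
  set b := (f ^ (M + 1)) c with hb_def
  have hb : k b = b := by rw [← (hfk.pow_left _).apply_eq, hc]
  have hab : a < b := hM.trans_lt (by rw [hb_def, pow_succ', RelIso.mul_apply]; exact hf _)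
  have hpow : ∀ n : ℕ, f ^ n ∈ orbitalStabilizer k a → n = 0 := by
    intro n hn
    by_contra hn0
    obtain ⟨N, hN⟩ := hf' a b
    have hlt : (f ^ (n * N)) a < b :=
      pow_mul f n N ▸ orbRel_lt_of_apply_eq hb hab (pow_mem hn N).2
    have hle : (f ^ N) a ≤ (f ^ (n * N)) a := monotone_pow_apply (fun x => (hf x).le) a
      (Nat.le_mul_of_pos_left N (Nat.pos_of_ne_zero hn0))
    exact (hN.trans hle).not_gt hlt
  rw [Subgroup.disjoint_def]
  intro W hW hWf
  obtain ⟨i, rfl⟩ := Subgroup.mem_zpowers_iff.1 hWf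
  obtain ⟨n, rfl | rfl⟩ := Int.eq_nat_or_neg i
  · simp [hpow n (by simpa using hW)]
  · simp [hpow n (by simpa using inv_mem hW)]

end OrbitalStabilizer

def IsWandering (A : Subgroup G) (p q : ℚ) : Prop :=
  ∀ W ∈ A, (∃ x ∈ Ioo p q, W x ∈ Ioo p q) → ∀ x ∈ Ioo p q, W x = x

theorem isWandering_zpowers_Ioo {u : G} {y : ℚ} (hy : y < u y) :
    IsWandering (Subgroup.zpowers u) y (u y) := by
  intro W hW ⟨x, hx, hWx⟩
  obtain ⟨j, rfl⟩ := Subgroup.mem_zpowers_iff.1 hW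
  have hmono : StrictMono fun i : ℤ => (u ^ i) y := strictMono_int_of_lt_succ fun i => by
    simpa [zpow_add_one] using (u ^ i).strictMono hy
  obtain rfl : j = 0 := by
    rcases lt_trichotomy j 0 with hj | hj | hj
    · have h1 : (u ^ j) x < (u ^ (j + 1)) y := by
        rw [zpow_add_one, RelIso.mul_apply]; exact (u ^ j).strictMono hx.2
      have h2 : (u ^ (j + 1)) y ≤ (u ^ (0 : ℤ)) y := hmono.monotone (by omega)
      exact absurd (hWx.1.trans (h1.trans_le h2)) (by simp)
    · exact hj
    · have h1 : (u ^ j) y < (u ^ j) x := (u ^ j).strictMono hx.1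
      have h2 : (u ^ (1 : ℤ)) y ≤ (u ^ j) y := hmono.monotone (by omega)
      exact absurd ((h2.trans_lt h1).trans hWx.2) (by simp)
  simp

theorem exists_isWandering {f g k : G} (hfg : Commute f g)
    (hk : k ∈ Subgroup.centralizer (Subgroup.closure {f, g} : Set G))
    (hf : ∀ x, x < f x) (hf' : ∀ x y, ∃ m : ℕ, y ≤ (f ^ m) x) {c a : ℚ} (hc : k c = c)
    (ha : a < k a) : ∃ p q, p < q ∧ IsWandering (Subgroup.closure {f, g}) p q := by
  set A := Subgroup.closure ({f, g} : Set G)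
  have hAk : ∀ W ∈ A, Commute W k := fun W hW => Subgroup.mem_centralizer_iff.1 hk W hW
  have hfk : Commute f k := hAk f (Subgroup.subset_closure (by simp))
  obtain ⟨u, hu⟩ := exists_inf_closure_pair_eq_zpowers hfg
    (disjoint_orbitalStabilizer_zpowers hf hf' hfk hc a)
  have hpow : ∀ W ∈ A, ∀ x, orbRel k a x → orbRel k a (W x) → W ∈ Subgroup.zpowers u :=
    fun W hW x hx hWx => hu ▸ ⟨mem_orbitalStabilizer_of_orbRel (hAk W hW) hx hWx, hW⟩
  have hzu : Subgroup.zpowers u ≤ orbitalStabilizer k a := hu ▸ inf_le_left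
  by_cases hfix : ∀ x, orbRel k a x → u x = x
  · have hJ : ∀ t ∈ Ioo a (k a), orbRel k a t := fun t ht =>
      orbRel_of_le_of_le (orbRel_refl k a) ⟨1, 1, by simp, by simp⟩ ht.1.le ht.2.le
    refine ⟨a, k a, ha, fun W hW ⟨x, hx, hWx⟩ z hz => ?_⟩
    obtain ⟨j, rfl⟩ := Subgroup.mem_zpowers_iff.1 (hpow W hW x (hJ x hx) (hJ _ hWx))
    exact zpow_apply_eq_self_s18 (hfix z (hJ z hz)) j
  push Not at hfix
  obtain ⟨y, hy, huy⟩ := hfix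
  obtain ⟨v, hv, hyv⟩ : ∃ v, Subgroup.zpowers v = Subgroup.zpowers u ∧ y < v y := by
    rcases huy.lt_or_gt with h | h
    · exact ⟨u⁻¹, Subgroup.zpowers_inv, by simpa using (u⁻¹).strictMono h⟩
    · exact ⟨u, rfl, h⟩
  have hvy : orbRel k a (v y) :=
    orbRel_apply_of_mem_orbitalStabilizer (hzu (hv ▸ Subgroup.mem_zpowers v)) hy
  have hJ : ∀ t ∈ Ioo y (v y), orbRel k a t := fun t ht =>
    orbRel_of_le_of_le hy hvy ht.1.le ht.2.le
  refine ⟨y, v y, hyv, fun W hW hmeet => isWandering_zpowers_Ioo hyv W ?_ hmeet⟩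
  obtain ⟨x, hx, hWx⟩ := hmeet
  exact hv ▸ hpow W hW x (hJ x hx) (hJ _ hWx)

namespace IsWandering

variable {A : Subgroup G} {p q : ℚ}

theorem exists_apply_eq_of_mem_Ioo (W : G) {y : ℚ} (hy : y ∈ Ioo (W p) (W q)) :
    ∃ x : Ioo p q, W x = y := by
  obtain ⟨x, hx, rfl⟩ := (W.image_Ioo p q).symm ▸ hy
  exact ⟨⟨x, hx⟩, rfl⟩

theorem eqOn_of_apply_eq (hJ : IsWandering A p q) {V W : G} (hV : V ∈ A) (hW : W ∈ A)
    {x y : ℚ} (hx : x ∈ Ioo p q) (hy : y ∈ Ioo p q) (h : V x = W y) : EqOn V W (Ioo p q) := by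
  have hfix := hJ (W⁻¹ * V) (mul_mem (inv_mem hW) hV) ⟨x, hx, by simpa [h] using hy⟩
  intro z hz
  simpa using congrArg W (hfix z hz)

theorem apply_le_apply_of_notMem_Ioo (hJ : IsWandering A p q) {V W : G} (hV : V ∈ A)
    (hW : W ∈ A) (x : Ioo p q) (hlt : W p < V x) (hx : V x ∉ Ioo (W p) (W q)) : W q ≤ V p := by
  have hpq : p < q := x.2.1.trans x.2.2
  by_contra! hVW
  have hWV : W p < V q := hlt.trans (V.strictMono x.2.2)
  obtain ⟨z, hz⟩ : (Ioo (W p) (W q) ∩ Ioo (V p) (V q)).Nonempty := by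
    rw [Ioo_inter_Ioo, nonempty_Ioo, max_lt_iff, lt_min_iff, lt_min_iff]
    exact ⟨⟨W.strictMono hpq, hWV⟩, hVW, V.strictMono hpq⟩
  obtain ⟨xW, hxW⟩ := exists_apply_eq_of_mem_Ioo W hz.1
  obtain ⟨xV, hxV⟩ := exists_apply_eq_of_mem_Ioo V hz.2
  have hVW := hJ.eqOn_of_apply_eq hV hW xV.2 xW.2 (hxV.trans hxW.symm)
  exact hx (hVW x.2 ▸ ⟨W.strictMono x.2.1, W.strictMono x.2.2⟩)

end IsWandering

-- `W ∘ ρ ∘ W⁻¹` on each translate `W '' Ioo p q` with `W ∈ A`, the identity off all of them.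
open Classical in
noncomputable def spreadFun (A : Subgroup G) (p q : ℚ) (ρ : Ioo p q ≃o Ioo p q) (y : ℚ) : ℚ :=
  if h : ∃ W ∈ A, ∃ x : Ioo p q, W x = y then h.choose (ρ h.choose_spec.2.choose) else y

section Spread

variable {A : Subgroup G} {p q : ℚ} (hJ : IsWandering A p q) (ρ : Ioo p q ≃o Ioo p q)
include hJ

theorem spreadFun_apply {W : G} (hW : W ∈ A) (x : Ioo p q) :
    spreadFun A p q ρ (W x) = W (ρ x) := by
  have h : ∃ V ∈ A, ∃ x' : Ioo p q, V x' = W x := ⟨W, hW, x, rfl⟩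
  rw [spreadFun, dif_pos h]
  obtain ⟨hV, hx'⟩ := h.choose_spec
  have hVW := hJ.eqOn_of_apply_eq hV hW hx'.choose.2 x.2 hx'.choose_spec
  have hx : hx'.choose = x :=
    Subtype.ext (W.injective ((hVW hx'.choose.2).symm.trans hx'.choose_spec))
  rw [hx]
  exact hVW (ρ x).2

omit hJ in
theorem spreadFun_of_forall_ne {y : ℚ} (h : ∀ W ∈ A, ∀ x : Ioo p q, W x ≠ y) :
    spreadFun A p q ρ y = y :=
  dif_neg fun ⟨W, hW, x, hx⟩ => h W hW x hx

theorem spreadFun_apply_eq_apply_spreadFun {U : G} (hU : U ∈ A) (y : ℚ) :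
    spreadFun A p q ρ (U y) = U (spreadFun A p q ρ y) := by
  by_cases h : ∃ W ∈ A, ∃ x : Ioo p q, W x = y
  · obtain ⟨W, hW, x, rfl⟩ := h
    change spreadFun A p q ρ ((U * W) x) = U (spreadFun A p q ρ (W x))
    rw [spreadFun_apply hJ ρ (mul_mem hU hW), spreadFun_apply hJ ρ hW, RelIso.mul_apply]
  · push Not at h
    have hU' : ∀ W ∈ A, ∀ x : Ioo p q, W x ≠ U y := fun W hW x hx =>
      h (U⁻¹ * W) (mul_mem (inv_mem hU) hW) x (by simp [hx])
    rw [spreadFun_of_forall_ne ρ h, spreadFun_of_forall_ne ρ hU']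

theorem leftInverse_spreadFun :
    Function.LeftInverse (spreadFun A p q ρ.symm) (spreadFun A p q ρ) := by
  intro y
  by_cases h : ∃ W ∈ A, ∃ x : Ioo p q, W x = y
  · obtain ⟨W, hW, x, rfl⟩ := h
    rw [spreadFun_apply hJ ρ hW, spreadFun_apply hJ ρ.symm hW, OrderIso.symm_apply_apply]
  · push Not at h
    rw [spreadFun_of_forall_ne ρ h, spreadFun_of_forall_ne ρ.symm h]

theorem spreadFun_mem_Ioo {W : G} (hW : W ∈ A) (x : Ioo p q) :
    spreadFun A p q ρ (W x) ∈ Ioo (W p) (W q) := by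
  rw [spreadFun_apply hJ ρ hW]
  exact ⟨W.strictMono (ρ x).2.1, W.strictMono (ρ x).2.2⟩

theorem monotone_spreadFun : Monotone (spreadFun A p q ρ) := by
  intro y y' hyy'
  by_cases hy : ∃ W ∈ A, ∃ x : Ioo p q, W x = y
  · obtain ⟨W, hW, x, rfl⟩ := hy
    by_cases hsame : y' ∈ Ioo (W p) (W q)
    · obtain ⟨x', rfl⟩ := IsWandering.exists_apply_eq_of_mem_Ioo W hsame
      rw [spreadFun_apply hJ ρ hW, spreadFun_apply hJ ρ hW]
      exact W.monotone (ρ.monotone (W.le_iff_le.1 hyy'))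
    have hWq : W q ≤ y' := by
      by_contra! h
      exact hsame ⟨(W.strictMono x.2.1).trans_le hyy', h⟩
    refine (spreadFun_mem_Ioo hJ ρ hW x).2.le.trans ?_
    by_cases hy' : ∃ V ∈ A, ∃ x' : Ioo p q, V x' = y'
    · obtain ⟨V, hV, x', rfl⟩ := hy'
      exact (hJ.apply_le_apply_of_notMem_Ioo hV hW x' ((W.strictMono x.2.1).trans_le hyy')
        hsame).trans (spreadFun_mem_Ioo hJ ρ hV x').1.le
    · push Not at hy'
      rwa [spreadFun_of_forall_ne ρ hy']
  · push Not at hy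
    rw [spreadFun_of_forall_ne ρ hy]
    by_cases hy' : ∃ V ∈ A, ∃ x' : Ioo p q, V x' = y'
    · obtain ⟨V, hV, x', rfl⟩ := hy'
      refine le_of_lt (lt_of_le_of_lt ?_ (spreadFun_mem_Ioo hJ ρ hV x').1)
      by_contra! h
      obtain ⟨x, hx⟩ :=
        IsWandering.exists_apply_eq_of_mem_Ioo V ⟨h, hyy'.trans_lt (V.strictMono x'.2.2)⟩
      exact hy V hV x hx
    · push Not at hy'
      rwa [spreadFun_of_forall_ne ρ hy']

noncomputable def spread : G :=
  Equiv.toOrderIso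
    ⟨spreadFun A p q ρ, spreadFun A p q ρ.symm, leftInverse_spreadFun hJ ρ,
      leftInverse_spreadFun hJ ρ.symm⟩
    (monotone_spreadFun hJ ρ) (monotone_spreadFun hJ ρ.symm)

theorem spread_mem_centralizer : spread hJ ρ ∈ Subgroup.centralizer (A : Set G) :=
  Subgroup.mem_centralizer_iff.2 fun _ hU =>
    RelIso.ext fun y => (spreadFun_apply_eq_apply_spreadFun hJ ρ hU y).symm

theorem spread_apply_of_mem (x : Ioo p q) : spread hJ ρ x = ρ x :=
  spreadFun_apply hJ ρ (one_mem A) x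

end Spread

theorem exists_orderIso_apply_apply_ne {α : Type*} [LE α] (e : ℚ ≃o α) :
    ∃ (ρ₁ ρ₂ : α ≃o α) (x : α), ρ₁ (ρ₂ x) ≠ ρ₂ (ρ₁ x) := by
  let σ₁ : G := OrderIso.mulLeft₀ 2 two_pos
  let σ₂ : G := OrderIso.addRight 1
  refine ⟨e.symm.trans (σ₁.trans e), e.symm.trans (σ₂.trans e), e 0, ?_⟩
  norm_num [σ₁, σ₂]

theorem IsWandering.exists_centralizer_apply_apply_ne {A : Subgroup G} {p q : ℚ} (hpq : p < q)
    (hJ : IsWandering A p q) :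
    ∃ Φ ∈ Subgroup.centralizer (A : Set G), ∃ Ψ ∈ Subgroup.centralizer (A : Set G),
      ∃ x, Φ (Ψ x) ≠ Ψ (Φ x) := by
  have : Nonempty (Ioo p q) := (nonempty_Ioo.2 hpq).to_subtype
  obtain ⟨e⟩ := Order.iso_of_countable_dense ℚ (Ioo p q)
  obtain ⟨ρ₁, ρ₂, x, hx⟩ := exists_orderIso_apply_apply_ne e
  refine ⟨spread hJ ρ₁, spread_mem_centralizer hJ ρ₁, spread hJ ρ₂, spread_mem_centralizer hJ ρ₂,
    x, ?_⟩
  rw [spread_apply_of_mem, spread_apply_of_mem, spread_apply_of_mem, spread_apply_of_mem]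
  exact fun h => hx (Subtype.ext h)

theorem eq_one_of_apply_eq_self {f g k : G} (hfg : Commute f g) (hf : ∀ x, x < f x)
    (hf' : ∀ x y, ∃ m : ℕ, y ≤ (f ^ m) x)
    (hcomm : ∀ Φ ∈ Subgroup.centralizer (Subgroup.closure {f, g} : Set G),
      ∀ Ψ ∈ Subgroup.centralizer (Subgroup.closure {f, g} : Set G), ∀ x, Φ (Ψ x) = Ψ (Φ x))
    (hk : k ∈ Subgroup.centralizer (Subgroup.closure {f, g} : Set G)) {c : ℚ} (hc : k c = c) :
    k = 1 := by
  have hnot_lt : ∀ k' ∈ Subgroup.centralizer (Subgroup.closure {f, g} : Set G), k' c = c →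
      ∀ a, ¬ a < k' a := by
    intro k' hk' hc' a ha
    obtain ⟨p, q, hpq, hJ⟩ := exists_isWandering hfg hk' hf hf' hc' ha
    obtain ⟨Φ, hΦ, Ψ, hΨ, x, hx⟩ := hJ.exists_centralizer_apply_apply_ne hpq
    exact hx (hcomm Φ hΦ Ψ hΨ x)
  by_contra hk1
  obtain ⟨a, ha⟩ : ∃ a, k a ≠ a := by
    by_contra! h
    exact hk1 (RelIso.ext h)
  rcases ha.lt_or_gt with h | h
  · exact hnot_lt k⁻¹ (inv_mem hk) (k.symm_apply_eq.2 hc.symm) a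
      (by simpa using k⁻¹.strictMono h)
  · exact hnot_lt k hk hc a h

theorem jointCentralizer_eq_centralizer (f g : G) :
    jointCentralizer f g = Subgroup.centralizer (Subgroup.closure {f, g} : Set G) := by
  ext h
  rw [SetLike.mem_coe, Subgroup.centralizer_closure, Subgroup.mem_centralizer_iff]
  simp only [Set.forall_mem_insert, Set.mem_singleton_iff, forall_eq]
  simp only [RelIso.ext_iff, RelIso.mul_apply]
  exact (forall_congr' fun _ => eq_comm).and (forall_congr' fun _ => eq_comm)

theorem Subgroup.countable_of_eq_one_of_apply_eq_self (H : Subgroup G)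
    (hH : ∀ k ∈ H, ∀ c, k c = c → k = 1) : (H : Set G).Countable := by
  refine (mapsTo_univ (fun k : G => k 0) _).countable_of_injOn (fun k hk k' hk' h => ?_)
    countable_univ
  have := hH (k⁻¹ * k') (mul_mem (inv_mem hk) hk') 0 (by simp [← h])
  exact inv_mul_eq_one.1 this

theorem gauge_centralizer_countable_general
    (f g : G)
    (h1 : ∀ a : ℚ, a < f a)
    (h3 : ∀ a b : ℚ, ∃ m : ℕ, b ≤ (f ^ m) a)
    (h5 : ∀ a : ℚ, f (g a) = g (f a))
    (h6 : ∀ h₁ ∈ jointCentralizer f g, ∀ h₂ ∈ jointCentralizer f g,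
      ∀ a : ℚ, h₁ (h₂ a) = h₂ (h₁ a)) :
    (jointCentralizer f g).Countable := by
  have hfg : Commute f g := RelIso.ext h5
  rw [jointCentralizer_eq_centralizer] at h6 ⊢
  exact Subgroup.countable_of_eq_one_of_apply_eq_self _ fun k hk c hc =>
    eq_one_of_apply_eq_self hfg h1 h3 h6 hk hc

/-- If `f, g` is a gauge pair (commuting positive coterminal elements with commutative joint
centralizer), then the joint centralizer of `f` and `g` is countable. -/
theorem gauge_centralizer_countable
    (f g : G)
    (h1 : ∀ a : ℚ, a < f a) (h2 : ∀ a : ℚ, a < g a)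
    (h3 : ∀ a b : ℚ, ∃ m : ℕ, b ≤ (f ^ m) a)
    (h4 : ∀ a b : ℚ, ∃ n : ℕ, b ≤ (g ^ n) a)
    (h5 : ∀ a : ℚ, f (g a) = g (f a))
    (h6 : ∀ h₁ ∈ jointCentralizer f g, ∀ h₂ ∈ jointCentralizer f g,
      ∀ a : ℚ, h₁ (h₂ a) = h₂ (h₁ a)) :
    (jointCentralizer f g).Countable :=
  gauge_centralizer_countable_general f g h1 h3 h5 h6
end

section
/- For every finite subset S of ℚ there exists f ∈ G such that {a ∈ ℚ : f a = a} = S and a < f a for every a ∉ S; consequently f has only finitely many orbitals, and every orbital of f bounded above in ℚ has rational supremum in ℝ and every orbital bounded below in ℚ has rational infimum in ℝ. -/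
open FirstOrder

namespace Enc

/-! ### Optional max/min of finsets -/

noncomputable def omax (t : Finset ℚ) : Option ℚ :=
  if h : t.Nonempty then some (t.max' h) else none

noncomputable def omin (t : Finset ℚ) : Option ℚ :=
  if h : t.Nonempty then some (t.min' h) else none

lemma omax_mem {t : Finset ℚ} {u : ℚ} (h : omax t = some u) : u ∈ t := by
  unfold omax at h; split_ifs at h with h1
  cases h; exact t.max'_mem h1

lemma le_omax {t : Finset ℚ} {u b : ℚ} (h : omax t = some u) (hb : b ∈ t) : b ≤ u := by
  unfold omax at h; split_ifs at h with h1
  cases h; exact t.le_max' _ hb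

lemma omax_some_of_mem {t : Finset ℚ} {b : ℚ} (hb : b ∈ t) : ∃ u, omax t = some u := by
  unfold omax; rw [dif_pos ⟨b, hb⟩]; exact ⟨_, rfl⟩

lemma omin_mem {t : Finset ℚ} {v : ℚ} (h : omin t = some v) : v ∈ t := by
  unfold omin at h; split_ifs at h with h1
  cases h; exact t.min'_mem h1

lemma omin_le {t : Finset ℚ} {v b : ℚ} (h : omin t = some v) (hb : b ∈ t) : v ≤ b := by
  unfold omin at h; split_ifs at h with h1
  cases h; exact t.min'_le _ hb

lemma omin_some_of_mem {t : Finset ℚ} {b : ℚ} (hb : b ∈ t) : ∃ v, omin t = some v := by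
  unfold omin; rw [dif_pos ⟨b, hb⟩]; exact ⟨_, rfl⟩

/-! ### The piecewise maps -/

def up : Option ℚ × Option ℚ → ℚ → ℚ
  | (none, none), x => x + 1
  | (some u, none), x => min (2*x - u) (x + 1)
  | (none, some v), x => min (x + 1) ((x + v)/2)
  | (some u, some v), x => min ((3*x - u)/2) ((x + v)/2)

def dn : Option ℚ × Option ℚ → ℚ → ℚ
  | (none, none), y => y - 1
  | (some u, none), y => max ((y + u)/2) (y - 1)
  | (none, some v), y => max (y - 1) (2*y - v)
  | (some u, some v), y => max ((2*y + u)/3) (2*y - v)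

def OKd (d : Option ℚ × Option ℚ) (x : ℚ) : Prop :=
  (∀ u ∈ d.1, u < x) ∧ (∀ v ∈ d.2, x < v)

def OI (d : Option ℚ × Option ℚ) : Set ℚ := {b : ℚ | OKd d b}

lemma lt_up {d : Option ℚ × Option ℚ} {x : ℚ} (h : OKd d x) : x < up d x := by
  obtain ⟨h1, h2⟩ := h
  rcases d with ⟨_ | u, _ | v⟩
  · simp [up]
  · have hv : x < v := h2 v rfl
    simp only [up, lt_min_iff]; constructor <;> linarith
  · have hu : u < x := h1 u rfl
    simp only [up, lt_min_iff]; constructor <;> linarith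
  · have hu : u < x := h1 u rfl
    have hv : x < v := h2 v rfl
    simp only [up, lt_min_iff]; constructor <;> linarith

lemma up_lt {d : Option ℚ × Option ℚ} {x v : ℚ} (h : OKd d x) (hv : d.2 = some v) :
    up d x < v := by
  obtain ⟨h1, h2⟩ := h
  have hxv : x < v := h2 v (by rw [hv]; rfl)
  rcases d with ⟨_ | u, d2⟩ <;> cases hv
  · simp only [up, min_lt_iff]; right; linarith
  · simp only [up, min_lt_iff]; right; linarith

lemma dn_lt {d : Option ℚ × Option ℚ} {y : ℚ} (h : OKd d y) : dn d y < y := by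
  obtain ⟨h1, h2⟩ := h
  rcases d with ⟨_ | u, _ | v⟩
  · simp [dn]
  · have hv : y < v := h2 v rfl
    simp only [dn, max_lt_iff]; constructor <;> linarith
  · have hu : u < y := h1 u rfl
    simp only [dn, max_lt_iff]; constructor <;> linarith
  · have hu : u < y := h1 u rfl
    have hv : y < v := h2 v rfl
    simp only [dn, max_lt_iff]; constructor <;> linarith

lemma lt_dn {d : Option ℚ × Option ℚ} {y u : ℚ} (h : OKd d y) (hu : d.1 = some u) :
    u < dn d y := by
  obtain ⟨h1, h2⟩ := h
  have huy : u < y := h1 u (by rw [hu]; rfl)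
  rcases d with ⟨d1, _ | v⟩ <;> cases hu
  · simp only [dn, lt_max_iff]; left; linarith
  · simp only [dn, lt_max_iff]; left; linarith

lemma dn_up {d : Option ℚ × Option ℚ} {x : ℚ} (h : OKd d x) : dn d (up d x) = x := by
  obtain ⟨h1, h2⟩ := h
  rcases d with ⟨_ | u, _ | v⟩
  · show x + 1 - 1 = x; ring
  · show max (min (x + 1) ((x + v)/2) - 1) (2*(min (x + 1) ((x + v)/2)) - v) = x
    have a1 : min (x + 1) ((x + v)/2) ≤ x + 1 := min_le_left _ _
    have a2 : min (x + 1) ((x + v)/2) ≤ (x + v)/2 := min_le_right _ _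
    apply le_antisymm
    · exact max_le (by linarith) (by linarith)
    · rcases min_choice (x + 1) ((x + v)/2) with h | h
      · exact le_max_iff.mpr (Or.inl (by rw [h]; ring_nf; linarith))
      · exact le_max_iff.mpr (Or.inr (by rw [h]; ring_nf; linarith))
  · show max ((min (2*x - u) (x + 1) + u)/2) (min (2*x - u) (x + 1) - 1) = x
    have a1 : min (2*x - u) (x + 1) ≤ 2*x - u := min_le_left _ _
    have a2 : min (2*x - u) (x + 1) ≤ x + 1 := min_le_right _ _
    apply le_antisymm
    · exact max_le (by linarith) (by linarith)
    · rcases min_choice (2*x - u) (x + 1) with h | h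
      · exact le_max_iff.mpr (Or.inl (by rw [h]; ring_nf; linarith))
      · exact le_max_iff.mpr (Or.inr (by rw [h]; ring_nf; linarith))
  · show max ((2*(min ((3*x - u)/2) ((x + v)/2)) + u)/3)
        (2*(min ((3*x - u)/2) ((x + v)/2)) - v) = x
    have a1 : min ((3*x - u)/2) ((x + v)/2) ≤ (3*x - u)/2 := min_le_left _ _
    have a2 : min ((3*x - u)/2) ((x + v)/2) ≤ (x + v)/2 := min_le_right _ _
    apply le_antisymm
    · exact max_le (by linarith) (by linarith)
    · rcases min_choice ((3*x - u)/2) ((x + v)/2) with h | h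
      · exact le_max_iff.mpr (Or.inl (by rw [h]; ring_nf; linarith))
      · exact le_max_iff.mpr (Or.inr (by rw [h]; ring_nf; linarith))

lemma up_dn {d : Option ℚ × Option ℚ} {y : ℚ} (h : OKd d y) : up d (dn d y) = y := by
  obtain ⟨h1, h2⟩ := h
  rcases d with ⟨_ | u, _ | v⟩
  · show y - 1 + 1 = y; ring
  · show min (max (y - 1) (2*y - v) + 1) ((max (y - 1) (2*y - v) + v)/2) = y
    have a1 : y - 1 ≤ max (y - 1) (2*y - v) := le_max_left _ _
    have a2 : 2*y - v ≤ max (y - 1) (2*y - v) := le_max_right _ _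
    apply le_antisymm
    · rcases max_choice (y - 1) (2*y - v) with h | h
      · exact min_le_iff.mpr (Or.inl (by rw [h]; ring_nf; linarith))
      · exact min_le_iff.mpr (Or.inr (by rw [h]; ring_nf; linarith))
    · exact le_min (by linarith) (by linarith)
  · show min (2*(max ((y + u)/2) (y - 1)) - u) (max ((y + u)/2) (y - 1) + 1) = y
    have a1 : (y + u)/2 ≤ max ((y + u)/2) (y - 1) := le_max_left _ _
    have a2 : y - 1 ≤ max ((y + u)/2) (y - 1) := le_max_right _ _
    apply le_antisymm
    · rcases max_choice ((y + u)/2) (y - 1) with h | h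
      · exact min_le_iff.mpr (Or.inl (by rw [h]; ring_nf; linarith))
      · exact min_le_iff.mpr (Or.inr (by rw [h]; ring_nf; linarith))
    · exact le_min (by linarith) (by linarith)
  · show min ((3*(max ((2*y + u)/3) (2*y - v)) - u)/2)
        ((max ((2*y + u)/3) (2*y - v) + v)/2) = y
    have a1 : (2*y + u)/3 ≤ max ((2*y + u)/3) (2*y - v) := le_max_left _ _
    have a2 : 2*y - v ≤ max ((2*y + u)/3) (2*y - v) := le_max_right _ _
    apply le_antisymm
    · rcases max_choice ((2*y + u)/3) (2*y - v) with h | h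
      · exact min_le_iff.mpr (Or.inl (by rw [h]; ring_nf; linarith))
      · exact min_le_iff.mpr (Or.inr (by rw [h]; ring_nf; linarith))
    · exact le_min (by linarith) (by linarith)

lemma up_strictMono (d : Option ℚ × Option ℚ) : StrictMono (up d) := by
  intro x y hxy
  rcases d with ⟨_ | u, _ | v⟩ <;> simp only [up]
  · linarith
  · exact lt_min (lt_of_le_of_lt (min_le_left _ _) (by linarith))
      (lt_of_le_of_lt (min_le_right _ _) (by linarith))
  · exact lt_min (lt_of_le_of_lt (min_le_left _ _) (by linarith))
      (lt_of_le_of_lt (min_le_right _ _) (by linarith))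
  · exact lt_min (lt_of_le_of_lt (min_le_left _ _) (by linarith))
      (lt_of_le_of_lt (min_le_right _ _) (by linarith))

/-! ### The automorphism attached to a finite set -/

variable (S : Finset ℚ)

noncomputable def dat (x : ℚ) : Option ℚ × Option ℚ :=
  (omax (S.filter (· < x)), omin (S.filter (x < ·)))

lemma okd_dat (x : ℚ) : OKd (dat S x) x := by
  constructor
  · intro u hu
    have := omax_mem (Option.mem_def.mp hu)
    exact (Finset.mem_filter.mp this).2
  · intro v hv
    have := omin_mem (Option.mem_def.mp hv)
    exact (Finset.mem_filter.mp this).2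

lemma dat1_mem {x u : ℚ} (h : (dat S x).1 = some u) : u ∈ S ∧ u < x := by
  have := omax_mem (t := S.filter (· < x)) h
  exact Finset.mem_filter.mp this

lemma dat2_mem {x v : ℚ} (h : (dat S x).2 = some v) : v ∈ S ∧ x < v := by
  have := omin_mem (t := S.filter (x < ·)) h
  exact Finset.mem_filter.mp this

lemma dat1_ge {x u s : ℚ} (h : (dat S x).1 = some u) (hs : s ∈ S) (hsx : s < x) : s ≤ u :=
  le_omax h (Finset.mem_filter.mpr ⟨hs, hsx⟩)

lemma dat2_le {x v s : ℚ} (h : (dat S x).2 = some v) (hs : s ∈ S) (hxs : x < s) : v ≤ s :=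
  omin_le h (Finset.mem_filter.mpr ⟨hs, hxs⟩)

lemma dat1_some {x s : ℚ} (hs : s ∈ S) (hsx : s < x) : ∃ u, (dat S x).1 = some u :=
  omax_some_of_mem (Finset.mem_filter.mpr ⟨hs, hsx⟩)

lemma dat2_some {x s : ℚ} (hs : s ∈ S) (hxs : x < s) : ∃ v, (dat S x).2 = some v :=
  omin_some_of_mem (Finset.mem_filter.mpr ⟨hs, hxs⟩)

/-- Any point of the interval `OI (dat S a)` (for `a ∉ S`) is not in `S` and has the
same interval data as `a`. -/
lemma coherent {a : ℚ} (ha : a ∉ S) {z : ℚ} (hz : z ∈ OI (dat S a)) :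
    z ∉ S ∧ dat S z = dat S a := by
  obtain ⟨hz1, hz2⟩ := hz
  have key : ∀ s ∈ S, s < z ↔ s < a := by
    intro s hs
    constructor
    · intro hsz
      rcases lt_trichotomy s a with h | h | h
      · exact h
      · exact absurd (h ▸ hs) ha
      · obtain ⟨v, hv⟩ := dat2_some S hs h
        have := hz2 v (Option.mem_def.mpr hv)
        have := dat2_le S hv hs h
        linarith
    · intro hsa
      obtain ⟨u, hu⟩ := dat1_some S hs hsa
      have h1 := hz1 u (Option.mem_def.mpr hu)
      have h2 := dat1_ge S hu hs hsa
      linarith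
  have key' : ∀ s ∈ S, z < s ↔ a < s := by
    intro s hs
    constructor
    · intro hzs
      rcases lt_trichotomy a s with h | h | h
      · exact h
      · exact absurd (h.symm ▸ hs) ha
      · obtain ⟨u, hu⟩ := dat1_some S hs h
        have := hz1 u (Option.mem_def.mpr hu)
        have := dat1_ge S hu hs h
        linarith
    · intro has
      obtain ⟨v, hv⟩ := dat2_some S hs has
      have h1 := hz2 v (Option.mem_def.mpr hv)
      have h2 := dat2_le S hv hs has
      linarith
  constructor
  · intro hzS
    have h1 := (key z hzS)
    have h2 := (key' z hzS)
    rcases lt_trichotomy z a with h | h | h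
    · obtain ⟨u, hu⟩ := dat1_some S hzS h
      have := hz1 u (Option.mem_def.mpr hu)
      have := dat1_ge S hu hzS h
      linarith
    · exact ha (h ▸ hzS)
    · obtain ⟨v, hv⟩ := dat2_some S hzS h
      have := hz2 v (Option.mem_def.mpr hv)
      have := dat2_le S hv hzS h
      linarith
  · unfold dat
    have e1 : S.filter (· < z) = S.filter (· < a) := by
      apply Finset.filter_congr
      intro s hs
      simpa using key s hs
    have e2 : S.filter (z < ·) = S.filter (a < ·) := by
      apply Finset.filter_congr
      intro s hs
      simpa using key' s hs
    rw [e1, e2]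

noncomputable def fup (x : ℚ) : ℚ := if x ∈ S then x else up (dat S x) x

noncomputable def gdn (y : ℚ) : ℚ := if y ∈ S then y else dn (dat S y) y

lemma fup_mem_S {x : ℚ} (hx : x ∈ S) : fup S x = x := if_pos hx

lemma fup_not_mem {x : ℚ} (hx : x ∉ S) : fup S x = up (dat S x) x := if_neg hx

lemma lt_fup {x : ℚ} (hx : x ∉ S) : x < fup S x := by
  rw [fup_not_mem S hx]; exact lt_up (okd_dat S x)

lemma le_fup (x : ℚ) : x ≤ fup S x := by
  by_cases hx : x ∈ S
  · rw [fup_mem_S S hx]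
  · exact (lt_fup S hx).le

lemma fup_mem_OI {x : ℚ} (hx : x ∉ S) : fup S x ∈ OI (dat S x) := by
  rw [fup_not_mem S hx]
  constructor
  · intro u hu
    have h1 := (okd_dat S x).1 u hu
    exact h1.trans (lt_up (okd_dat S x))
  · intro v hv
    exact up_lt (okd_dat S x) (Option.mem_def.mp hv)

lemma gdn_mem_OI {y : ℚ} (hy : y ∉ S) : gdn S y ∈ OI (dat S y) := by
  rw [gdn, if_neg hy]
  constructor
  · intro u hu
    exact lt_dn (okd_dat S y) (Option.mem_def.mp hu)
  · intro v hv
    have h1 := (okd_dat S y).2 v hv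
    exact (dn_lt (okd_dat S y)).trans h1

lemma gdn_fup (x : ℚ) : gdn S (fup S x) = x := by
  by_cases hx : x ∈ S
  · rw [fup_mem_S S hx, gdn, if_pos hx]
  · obtain ⟨hns, hdat⟩ := coherent S hx (fup_mem_OI S hx)
    rw [gdn, if_neg hns, hdat, fup_not_mem S hx, dn_up (okd_dat S x)]

lemma fup_gdn (y : ℚ) : fup S (gdn S y) = y := by
  by_cases hy : y ∈ S
  · rw [gdn, if_pos hy, fup_mem_S S hy]
  · obtain ⟨hns, hdat⟩ := coherent S hy (gdn_mem_OI S hy)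
    rw [fup_not_mem S hns, hdat, gdn, if_neg hy, up_dn (okd_dat S y)]

lemma fup_lt_of_lt {x s : ℚ} (hx : x ∉ S) (hs : s ∈ S) (hxs : x < s) : fup S x < s := by
  obtain ⟨v, hv⟩ := dat2_some S hs hxs
  rw [fup_not_mem S hx]
  exact (up_lt (okd_dat S x) hv).trans_le (dat2_le S hv hs hxs)

lemma fup_strictMono : StrictMono (fup S) := by
  intro x y hxy
  by_cases hx : x ∈ S <;> by_cases hy : y ∈ S
  · rw [fup_mem_S S hx, fup_mem_S S hy]; exact hxy
  · rw [fup_mem_S S hx]; exact hxy.trans (lt_fup S hy)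
  · rw [fup_mem_S S hy]; exact fup_lt_of_lt S hx hy hxy
  · by_cases hmid : ∃ s ∈ S, x < s ∧ s < y
    · obtain ⟨s, hs, h1, h2⟩ := hmid
      exact (fup_lt_of_lt S hx hs h1).trans (h2.trans (lt_fup S hy))
    · push_neg at hmid
      have hdat : dat S x = dat S y := by
        unfold dat
        have e1 : S.filter (· < x) = S.filter (· < y) := by
          apply Finset.filter_congr
          intro s hs
          show s < x ↔ s < y
          constructor
          · intro h; exact h.trans hxy
          · intro h
            rcases lt_trichotomy s x with h' | h' | h'
            · exact h'
            · exact absurd (h' ▸ hs) hx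
            · exact absurd h (not_lt.mpr (hmid s hs h'))
        have e2 : S.filter (x < ·) = S.filter (y < ·) := by
          apply Finset.filter_congr
          intro s hs
          show x < s ↔ y < s
          constructor
          · intro h
            rcases lt_trichotomy y s with h' | h' | h'
            · exact h'
            · exact absurd (h' ▸ hy) (by simpa using hs)
            · exact absurd h' (not_lt.mpr (hmid s hs h))
          · intro h; exact hxy.trans h
        rw [e1, e2]
      rw [fup_not_mem S hx, fup_not_mem S hy, hdat]
      exact up_strictMono _ hxy

noncomputable def F : G :=
  (fup_strictMono S).orderIsoOfSurjective _ (fun y => ⟨gdn S y, fup_gdn S y⟩)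

lemma F_apply (x : ℚ) : F S x = fup S x := rfl

lemma Finv_apply (y : ℚ) : (F S)⁻¹ y = gdn S y := by
  have : F S ((F S)⁻¹ y) = F S (gdn S y) := by
    show F S ((F S).symm y) = F S (gdn S y)
    rw [(F S).apply_symm_apply, F_apply, fup_gdn]
  exact (F S).injective this

/-! ### Iterates and orbitals -/

lemma pow_apply (g : G) : ∀ (n : ℕ) (x : ℚ), (g ^ n) x = (⇑g)^[n] x := by
  intro n
  induction n with
  | zero => intro x; rfl
  | succ k ih =>
    intro x
    rw [pow_succ, Function.iterate_succ_apply]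
    show (g ^ k) (g x) = _
    exact ih (g x)

lemma zpow_fixed (g : G) {s : ℚ} (hs : g s = s) : ∀ m : ℤ, (g ^ m) s = s := by
  have hn : ∀ n : ℕ, (g ^ n) s = s := by
    intro n
    rw [pow_apply]
    induction n with
    | zero => rfl
    | succ k ih => rw [Function.iterate_succ_apply, hs]; exact ih
  intro m
  rcases m.eq_nat_or_neg with ⟨n, rfl | rfl⟩
  · rw [zpow_natCast]; exact hn n
  · rw [zpow_neg, zpow_natCast]
    apply (g ^ n).injective
    rw [hn n]
    exact (g ^ n).apply_symm_apply s

lemma OI_convex {d : Option ℚ × Option ℚ} {lo hi b : ℚ} (hlo : lo ∈ OI d) (hhi : hi ∈ OI d)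
    (h1 : lo ≤ b) (h2 : b ≤ hi) : b ∈ OI d :=
  ⟨fun u hu => (hlo.1 u hu).trans_le h1, fun v hv => lt_of_le_of_lt h2 (hhi.2 v hv)⟩

lemma fup_mem_OI' {a z : ℚ} (ha : a ∉ S) (hz : z ∈ OI (dat S a)) :
    fup S z ∈ OI (dat S a) := by
  obtain ⟨hns, hdat⟩ := coherent S ha hz
  have := fup_mem_OI S hns
  rwa [hdat] at this

lemma gdn_mem_OI' {a z : ℚ} (ha : a ∉ S) (hz : z ∈ OI (dat S a)) :
    gdn S z ∈ OI (dat S a) := by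
  obtain ⟨hns, hdat⟩ := coherent S ha hz
  have := gdn_mem_OI S hns
  rwa [hdat] at this

lemma iterate_fup_mem {a : ℚ} (ha : a ∉ S) (n : ℕ) : (fup S)^[n] a ∈ OI (dat S a) := by
  induction n with
  | zero => exact okd_dat S a
  | succ k ih =>
    rw [Function.iterate_succ_apply']
    exact fup_mem_OI' S ha ih

lemma iterate_gdn_mem {a : ℚ} (ha : a ∉ S) (n : ℕ) : (gdn S)^[n] a ∈ OI (dat S a) := by
  induction n with
  | zero => exact okd_dat S a
  | succ k ih =>
    rw [Function.iterate_succ_apply']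
    exact gdn_mem_OI' S ha ih

lemma zpow_mem_OI {a : ℚ} (ha : a ∉ S) (m : ℤ) : (F S ^ m) a ∈ OI (dat S a) := by
  rcases m.eq_nat_or_neg with ⟨n, rfl | rfl⟩
  · rw [zpow_natCast, pow_apply]
    exact iterate_fup_mem S ha n
  · rw [zpow_neg, zpow_natCast, ← inv_pow, pow_apply]
    have hco : ⇑((F S)⁻¹) = gdn S := funext (Finv_apply S)
    rw [hco]
    exact iterate_gdn_mem S ha n

lemma escape (f : ℚ → ℚ) (hf : ∀ z, z ≤ f z) (x y c : ℚ) (hc : 0 < c)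
    (h : ∀ z, x ≤ z → z ≤ y → c + z ≤ f z) : ∃ n : ℕ, y ≤ f^[n] x := by
  obtain ⟨n, hn⟩ := exists_nat_ge ((y - x)/c)
  have key : ∀ k : ℕ, y ≤ f^[k] x ∨ x + k * c ≤ f^[k] x := by
    intro k
    induction k with
    | zero => right; simp
    | succ k ih =>
      rw [Function.iterate_succ_apply']
      rcases ih with h1 | h1
      · left; exact h1.trans (hf _)
      · by_cases h2 : y ≤ f^[k] x
        · left; exact h2.trans (hf _)
        · right
          push_neg at h2
          have hkc : (0:ℚ) ≤ (k : ℚ) * c := mul_nonneg (Nat.cast_nonneg k) hc.le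
          have hx2 : x ≤ f^[k] x := by linarith
          have h3 := h _ hx2 h2.le
          push_cast
          linarith
  rcases key n with h1 | h1
  · exact ⟨n, h1⟩
  · refine ⟨n, ?_⟩
    rw [div_le_iff₀ hc] at hn
    linarith

lemma growth {a : ℚ} (ha : a ∉ S) {x y : ℚ} (hx : x ∈ OI (dat S a)) (hy : y ∈ OI (dat S a)) :
    ∃ n : ℕ, y ≤ (fup S)^[n] x := by
  by_cases hxy : y ≤ x
  · exact ⟨0, hxy⟩
  push_neg at hxy
  have hOI : ∀ z, x ≤ z → z ≤ y → z ∈ OI (dat S a) := fun z h1 h2 => OI_convex hx hy h1 h2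
  have hfz : ∀ z, x ≤ z → z ≤ y → fup S z = up (dat S a) z := by
    intro z h1 h2
    obtain ⟨hns, hdat⟩ := coherent S ha (hOI z h1 h2)
    rw [fup_not_mem S hns, hdat]
  rcases h2 : (dat S a).2 with _ | v
  · rcases h1 : (dat S a).1 with _ | u
    · have hd : dat S a = (none, none) := Prod.ext h1 h2
      apply escape (fup S) (le_fup S) x y 1 one_pos
      intro z hz1 hz2
      rw [hfz z hz1 hz2, hd]
      show 1 + z ≤ z + 1
      linarith
    · have hd : dat S a = (some u, none) := Prod.ext h1 h2
      have hu : u < x := hx.1 u (Option.mem_def.mpr h1)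
      apply escape (fup S) (le_fup S) x y (min (x - u) 1) (lt_min (by linarith) one_pos)
      intro z hz1 hz2
      rw [hfz z hz1 hz2, hd]
      show min (x - u) 1 + z ≤ min (2*z - u) (z + 1)
      refine le_min ?_ ?_
      · have := min_le_left (x - u) 1; linarith
      · have := min_le_right (x - u) 1; linarith
  · have hv : y < v := hy.2 v (Option.mem_def.mpr h2)
    rcases h1 : (dat S a).1 with _ | u
    · have hd : dat S a = (none, some v) := Prod.ext h1 h2
      apply escape (fup S) (le_fup S) x y (min 1 ((v - y)/2)) (lt_min one_pos (by linarith))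
      intro z hz1 hz2
      rw [hfz z hz1 hz2, hd]
      show min 1 ((v - y)/2) + z ≤ min (z + 1) ((z + v)/2)
      refine le_min ?_ ?_
      · have := min_le_left 1 ((v - y)/2); linarith
      · have := min_le_right 1 ((v - y)/2); linarith
    · have hd : dat S a = (some u, some v) := Prod.ext h1 h2
      have hu : u < x := hx.1 u (Option.mem_def.mpr h1)
      apply escape (fup S) (le_fup S) x y (min ((x - u)/2) ((v - y)/2))
        (lt_min (by linarith) (by linarith))
      intro z hz1 hz2
      rw [hfz z hz1 hz2, hd]
      show min ((x - u)/2) ((v - y)/2) + z ≤ min ((3*z - u)/2) ((z + v)/2)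
      refine le_min ?_ ?_
      · have := min_le_left ((x - u)/2) ((v - y)/2); linarith
      · have := min_le_right ((x - u)/2) ((v - y)/2); linarith

lemma comp_fixed {s : ℚ} (hs : s ∈ S) : {b : ℚ | orbRel (F S) s b} = {s} := by
  have hfix : F S s = s := fup_mem_S S hs
  ext b
  simp only [Set.mem_setOf_eq, Set.mem_singleton_iff]
  constructor
  · rintro ⟨m, n, hb1, hb2⟩
    rw [zpow_fixed (F S) hfix m] at hb1
    rw [zpow_fixed (F S) hfix n] at hb2
    exact le_antisymm hb2 hb1
  · rintro rfl
    refine ⟨0, 0, ?_, ?_⟩ <;> (rw [zpow_zero]; exact le_refl b)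

lemma comp_not_mem {a : ℚ} (ha : a ∉ S) :
    {b : ℚ | orbRel (F S) a b} = OI (dat S a) := by
  ext b
  simp only [Set.mem_setOf_eq]
  constructor
  · rintro ⟨m, n, hb1, hb2⟩
    exact OI_convex (zpow_mem_OI S ha m) (zpow_mem_OI S ha n) hb1 hb2
  · intro hb
    obtain ⟨n, hn⟩ := growth S ha (okd_dat S a) hb
    obtain ⟨m, hm⟩ := growth S ha hb (okd_dat S a)
    refine ⟨-(m:ℤ), (n:ℤ), ?_, ?_⟩
    · rw [zpow_neg, zpow_natCast]
      have h1 : a ≤ (F S ^ m) b := by rw [pow_apply]; exact hm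
      have h2 := ((F S ^ m)⁻¹ : G).monotone h1
      have h3 : ((F S ^ m)⁻¹ : G) ((F S ^ m) b) = b := (F S ^ m).symm_apply_apply b
      rwa [h3] at h2
    · rw [zpow_natCast, pow_apply]
      exact hn

end Enc

/-- Every finite subset `S` of `ℚ` is the fixed-point set of some `f ∈ G` which moves every
other point up; such an `f` has only finitely many orbitals, and every orbital of `f` bounded
above (resp. below) in `ℚ` has rational supremum (resp. infimum) in `ℝ`. -/
theorem finite_set_encoded (S : Finset ℚ) :
    ∃ f : G,
      {a : ℚ | f a = a} = (S : Set ℚ) ∧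
      (∀ a : ℚ, a ∉ S → a < f a) ∧
      {X : Set ℚ | IsOrbital f X}.Finite ∧
      (∀ X : Set ℚ, IsOrbital f X → BddAbove X →
        ∃ q : ℚ, IsLUB ((fun x : ℚ => (x : ℝ)) '' X) (q : ℝ)) ∧
      (∀ X : Set ℚ, IsOrbital f X → BddBelow X →
        ∃ q : ℚ, IsGLB ((fun x : ℚ => (x : ℝ)) '' X) (q : ℝ)) := by
  refine ⟨Enc.F S, ?_, ?_, ?_, ?_, ?_⟩
  · ext a
    simp only [Set.mem_setOf_eq, Finset.mem_coe]
    constructor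
    · intro h
      by_contra haS
      exact (Enc.lt_fup S haS).ne' h
    · intro haS
      exact Enc.fup_mem_S S haS
  · intro a ha
    exact Enc.lt_fup S ha
  · apply Set.Finite.subset
      (Set.Finite.union ((S.finite_toSet).image (fun s => ({s} : Set ℚ)))
        ((((S.finite_toSet.image some).insert none).prod
          ((S.finite_toSet.image some).insert none)).image Enc.OI))
    rintro X ⟨a, rfl⟩
    by_cases ha : a ∈ S
    · left
      exact ⟨a, Finset.mem_coe.mpr ha, (Enc.comp_fixed S ha).symm⟩
    · right
      refine ⟨Enc.dat S a, Set.mem_prod.mpr ⟨?_, ?_⟩, (Enc.comp_not_mem S ha).symm⟩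
      · rcases h : (Enc.dat S a).1 with _ | u
        · exact Set.mem_insert _ _
        · exact Set.mem_insert_iff.mpr (Or.inr ⟨u, Finset.mem_coe.mpr (Enc.dat1_mem S h).1, rfl⟩)
      · rcases h : (Enc.dat S a).2 with _ | v
        · exact Set.mem_insert _ _
        · exact Set.mem_insert_iff.mpr (Or.inr ⟨v, Finset.mem_coe.mpr (Enc.dat2_mem S h).1, rfl⟩)
  · rintro X ⟨a, rfl⟩ hbdd
    by_cases ha : a ∈ S
    · refine ⟨a, ?_⟩
      rw [Enc.comp_fixed S ha, Set.image_singleton]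
      exact isLUB_singleton
    · rw [Enc.comp_not_mem S ha] at hbdd ⊢
      rcases h2 : (Enc.dat S a).2 with _ | v
      · exfalso
        obtain ⟨B, hB⟩ := hbdd
        have hmem : max a B + 1 ∈ Enc.OI (Enc.dat S a) := by
          constructor
          · intro u hu
            have h3 := (Enc.okd_dat S a).1 u hu
            have h4 : a ≤ max a B := le_max_left _ _
            linarith
          · intro v hv
            rw [h2] at hv
            exact absurd hv (by simp)
        have h5 := hB hmem
        have h6 := le_max_right a B
        linarith
      · refine ⟨v, ?_, ?_⟩
        · rintro w ⟨b, hb, rfl⟩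
          have hbv : b < v := hb.2 v (Option.mem_def.mpr h2)
          show (b : ℝ) ≤ (v : ℝ)
          exact_mod_cast hbv.le
        · intro w hw
          by_contra hwv
          push_neg at hwv
          have hav : a < v := (Enc.dat2_mem S h2).2
          have haX : a ∈ Enc.OI (Enc.dat S a) := Enc.okd_dat S a
          have haw : ((a : ℚ) : ℝ) ≤ w := hw ⟨a, haX, rfl⟩
          have hav' : ((a : ℚ) : ℝ) < (v : ℝ) := by exact_mod_cast hav
          obtain ⟨q, hq1, hq2⟩ := exists_rat_btwn (show max w ((a : ℚ) : ℝ) < (v : ℝ) from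
            max_lt hwv hav')
          have hq_mem : q ∈ Enc.OI (Enc.dat S a) := by
            constructor
            · intro u hu
              have h3 := (Enc.okd_dat S a).1 u hu
              have h4 : ((a : ℚ) : ℝ) < (q : ℝ) := lt_of_le_of_lt (le_max_right w _) hq1
              have h5 : a < q := by exact_mod_cast h4
              linarith
            · intro v' hv'
              rw [h2] at hv'
              have hvv : v' = v := by simpa using (Option.mem_def.mp hv').symm
              subst hvv
              exact_mod_cast hq2
          have h7 : (q : ℝ) ≤ w := hw ⟨q, hq_mem, rfl⟩
          have h8 : w < (q : ℝ) := lt_of_le_of_lt (le_max_left _ _) hq1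
          linarith
  · rintro X ⟨a, rfl⟩ hbdd
    by_cases ha : a ∈ S
    · refine ⟨a, ?_⟩
      rw [Enc.comp_fixed S ha, Set.image_singleton]
      exact isGLB_singleton
    · rw [Enc.comp_not_mem S ha] at hbdd ⊢
      rcases h1 : (Enc.dat S a).1 with _ | u
      · exfalso
        obtain ⟨B, hB⟩ := hbdd
        have hmem : min a B - 1 ∈ Enc.OI (Enc.dat S a) := by
          constructor
          · intro u hu
            rw [h1] at hu
            exact absurd hu (by simp)
          · intro v hv
            have h3 := (Enc.okd_dat S a).2 v hv
            have h4 : min a B ≤ a := min_le_left _ _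
            linarith
        have h5 := hB hmem
        have h6 := min_le_right a B
        linarith
      · refine ⟨u, ?_, ?_⟩
        · rintro w ⟨b, hb, rfl⟩
          have hub : u < b := hb.1 u (Option.mem_def.mpr h1)
          show (u : ℝ) ≤ (b : ℝ)
          exact_mod_cast hub.le
        · intro w hw
          by_contra huw
          push_neg at huw
          have hua : u < a := (Enc.dat1_mem S h1).2
          have haX : a ∈ Enc.OI (Enc.dat S a) := Enc.okd_dat S a
          have haw : w ≤ ((a : ℚ) : ℝ) := hw ⟨a, haX, rfl⟩
          have hua' : (u : ℝ) < ((a : ℚ) : ℝ) := by exact_mod_cast hua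
          obtain ⟨q, hq1, hq2⟩ := exists_rat_btwn (show (u : ℝ) < min w ((a : ℚ) : ℝ) from
            lt_min huw hua')
          have hq_mem : q ∈ Enc.OI (Enc.dat S a) := by
            constructor
            · intro u' hu'
              rw [h1] at hu'
              have huu : u' = u := by simpa using (Option.mem_def.mp hu').symm
              subst huu
              exact_mod_cast hq1
            · intro v hv
              have h3 := (Enc.okd_dat S a).2 v hv
              have h4 : (q : ℝ) < ((a : ℚ) : ℝ) := lt_of_lt_of_le hq2 (min_le_right w _)
              have h5 : q < a := by exact_mod_cast h4
              linarith
          have h7 : w ≤ (q : ℝ) := hw ⟨q, hq_mem, rfl⟩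
          have h8 : (q : ℝ) < w := lt_of_lt_of_le hq2 (min_le_left _ _)
          linarith
end
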